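/- arXiv:2504.18976 — 6 statements merged into one kernel-verified Lean document; each statement's English description precedes it below -/
import Mathlib

section
/- Let ω = (−2,−1) ∪ (1,2) ⊂ ℝ. (i) For all real numbers a, b with −5 < a ≤ b < 2 there exists a constant C > 0 such that every measurable function W : ℝ → ℝ satisfies ∫_a^b W(s)² ds ≤ C ∫_0^3 ∫_ω W(x−t)² dx dt (an inequality in the extended nonnegative reals). (ii) For all real numbers a, b with −2 < a ≤ b < 5 there exists a constant C > 0 such that every measurable function W : ℝ → ℝ satisfies ∫_a^b W(s)² ds ≤ C ∫_0^3 ∫_ω W(x+t)² dx dt. -/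
open MeasureTheory Set
open scoped ENNReal

/-- The observation set ω = (−2,−1) ∪ (1,2). -/
def omegaSet : Set ℝ := Set.Ioo (-2 : ℝ) (-1) ∪ Set.Ioo (1 : ℝ) 2

lemma piece_core_sub (c d t0 t1 : ℝ) (h0 : 0 ≤ t0) (ht : t0 < t1) (h3 : t1 ≤ 3)
    (hmem : ∀ s ∈ Set.Ioc c d, ∀ t ∈ Set.Ioc t0 t1, s + t ∈ omegaSet) :
    ∃ C : ℝ, 0 < C ∧ ∀ g : ℝ → ℝ≥0∞, Measurable g →
      ∫⁻ s in Set.Ioc c d, g s ≤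
        ENNReal.ofReal C * ∫⁻ t in Set.Ioc (0:ℝ) 3, ∫⁻ x in omegaSet, g (x - t) := by
  refine ⟨(t1 - t0)⁻¹, inv_pos.2 (by linarith), fun g hg => ?_⟩
  set K := ∫⁻ s in Set.Ioc c d, g s with hK
  set I := ∫⁻ t in Set.Ioc (0:ℝ) 3, ∫⁻ x in omegaSet, g (x - t) with hI
  have step1 : ∀ t ∈ Set.Ioc t0 t1, K ≤ ∫⁻ x in omegaSet, g (x - t) := by
    intro t htmem
    have h1 : K = ∫⁻ x in Set.Ioc (c + t) (d + t), g (x - t) := by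
      rw [hK]
      have := (measurePreserving_add_right (volume : Measure ℝ) t).setLIntegral_comp_emb
        (MeasurableEquiv.addRight t).measurableEmbedding (fun x => g (x - t)) (Set.Ioc c d)
      simpa using this
    rw [h1]
    refine lintegral_mono_set ?_
    intro x hx
    have := hmem (x - t) ⟨by linarith [hx.1], by linarith [hx.2]⟩ t htmem
    simpa using this
  have step2 : K * ENNReal.ofReal (t1 - t0) ≤ I := by
    calc K * ENNReal.ofReal (t1 - t0)
        = K * volume (Set.Ioc t0 t1) := by rw [Real.volume_Ioc]
      _ = ∫⁻ _ in Set.Ioc t0 t1, K := (setLIntegral_const _ _).symm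
      _ ≤ ∫⁻ t in Set.Ioc t0 t1, ∫⁻ x in omegaSet, g (x - t) :=
          setLIntegral_mono' measurableSet_Ioc step1
      _ ≤ I := lintegral_mono_set (Set.Ioc_subset_Ioc h0 h3)
  have hne : ENNReal.ofReal (t1 - t0) ≠ 0 := by
    simp [ENNReal.ofReal_eq_zero]; linarith
  have := (ENNReal.le_div_iff_mul_le (Or.inl hne) (Or.inl ENNReal.ofReal_ne_top)).2 step2
  calc K ≤ I / ENNReal.ofReal (t1 - t0) := this
    _ = ENNReal.ofReal (t1 - t0)⁻¹ * I := by
        rw [ENNReal.ofReal_inv_of_pos (by linarith), ENNReal.div_eq_inv_mul]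

lemma piece_core_add (c d t0 t1 : ℝ) (h0 : 0 ≤ t0) (ht : t0 < t1) (h3 : t1 ≤ 3)
    (hmem : ∀ s ∈ Set.Ioc c d, ∀ t ∈ Set.Ioc t0 t1, s - t ∈ omegaSet) :
    ∃ C : ℝ, 0 < C ∧ ∀ g : ℝ → ℝ≥0∞, Measurable g →
      ∫⁻ s in Set.Ioc c d, g s ≤
        ENNReal.ofReal C * ∫⁻ t in Set.Ioc (0:ℝ) 3, ∫⁻ x in omegaSet, g (x + t) := by
  refine ⟨(t1 - t0)⁻¹, inv_pos.2 (by linarith), fun g hg => ?_⟩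
  set K := ∫⁻ s in Set.Ioc c d, g s with hK
  set I := ∫⁻ t in Set.Ioc (0:ℝ) 3, ∫⁻ x in omegaSet, g (x + t) with hI
  have step1 : ∀ t ∈ Set.Ioc t0 t1, K ≤ ∫⁻ x in omegaSet, g (x + t) := by
    intro t htmem
    have h1 : K = ∫⁻ x in Set.Ioc (c - t) (d - t), g (x + t) := by
      rw [hK]
      have := (measurePreserving_add_right (volume : Measure ℝ) (-t)).setLIntegral_comp_emb
        (MeasurableEquiv.addRight (-t)).measurableEmbedding (fun x => g (x + t)) (Set.Ioc c d)
      simpa [sub_eq_add_neg] using this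
    rw [h1]
    refine lintegral_mono_set ?_
    intro x hx
    have := hmem (x + t) ⟨by linarith [hx.1], by linarith [hx.2]⟩ t htmem
    simpa using this
  have step2 : K * ENNReal.ofReal (t1 - t0) ≤ I := by
    calc K * ENNReal.ofReal (t1 - t0)
        = K * volume (Set.Ioc t0 t1) := by rw [Real.volume_Ioc]
      _ = ∫⁻ _ in Set.Ioc t0 t1, K := (setLIntegral_const _ _).symm
      _ ≤ ∫⁻ t in Set.Ioc t0 t1, ∫⁻ x in omegaSet, g (x + t) :=
          setLIntegral_mono' measurableSet_Ioc step1
      _ ≤ I := lintegral_mono_set (Set.Ioc_subset_Ioc h0 h3)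
  have hne : ENNReal.ofReal (t1 - t0) ≠ 0 := by
    simp [ENNReal.ofReal_eq_zero]; linarith
  have := (ENNReal.le_div_iff_mul_le (Or.inl hne) (Or.inl ENNReal.ofReal_ne_top)).2 step2
  calc K ≤ I / ENNReal.ofReal (t1 - t0) := this
    _ = ENNReal.ofReal (t1 - t0)⁻¹ * I := by
        rw [ENNReal.ofReal_inv_of_pos (by linarith), ENNReal.div_eq_inv_mul]


lemma piece1 (c d : ℝ) (hc5 : -5 < c) (hcd : c ≤ d) (hd2 : d < 2) (hlen : d ≤ c + 1/2) :
    ∃ C : ℝ, 0 < C ∧ ∀ g : ℝ → ℝ≥0∞, Measurable g →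
      ∫⁻ s in Set.Ioc c d, g s ≤
        ENNReal.ofReal C * ∫⁻ t in Set.Ioc (0:ℝ) 3, ∫⁻ x in omegaSet, g (x - t) := by
  rcases lt_or_ge d (-1) with hd | hd
  · -- use the component (−2,−1); times t ∈ (max (−2−c) 0, min (mid) 3]
    set t0 : ℝ := max (-2 - c) 0 with ht0
    set t1 : ℝ := min ((t0 + (-1 - d)) / 2) 3 with ht1
    have ht0d : t0 < -1 - d := max_lt (by linarith) (by linarith)
    have ht0l : -2 - c ≤ t0 := le_max_left _ _
    have h0 : 0 ≤ t0 := le_max_right _ _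
    have ht03 : t0 < 3 := max_lt (by linarith) (by norm_num)
    have ht : t0 < t1 := lt_min (by linarith) ht03
    have h3 : t1 ≤ 3 := min_le_right _ _
    have ht1m : t1 ≤ (t0 + (-1 - d)) / 2 := min_le_left _ _
    refine piece_core_sub c d t0 t1 h0 ht h3 ?_
    intro s hs t htm
    exact Or.inl ⟨by have := htm.1; have := hs.1; linarith,
      by have := htm.2; have := hs.2; linarith⟩
  · -- use the component (1,2)
    have hc2 : -2 < c := by linarith
    set t0 : ℝ := max (1 - c) 0 with ht0
    set t1 : ℝ := min ((t0 + (2 - d)) / 2) 3 with ht1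
    have ht0d : t0 < 2 - d := max_lt (by linarith) (by linarith)
    have ht0l : 1 - c ≤ t0 := le_max_left _ _
    have h0 : 0 ≤ t0 := le_max_right _ _
    have ht03 : t0 < 3 := max_lt (by linarith) (by norm_num)
    have ht : t0 < t1 := lt_min (by linarith) ht03
    have h3 : t1 ≤ 3 := min_le_right _ _
    have ht1m : t1 ≤ (t0 + (2 - d)) / 2 := min_le_left _ _
    refine piece_core_sub c d t0 t1 h0 ht h3 ?_
    intro s hs t htm
    exact Or.inr ⟨by have := htm.1; have := hs.1; linarith,
      by have := htm.2; have := hs.2; linarith⟩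

lemma piece2 (c d : ℝ) (hc2 : -2 < c) (hcd : c ≤ d) (hd5 : d < 5) (hlen : d ≤ c + 1/2) :
    ∃ C : ℝ, 0 < C ∧ ∀ g : ℝ → ℝ≥0∞, Measurable g →
      ∫⁻ s in Set.Ioc c d, g s ≤
        ENNReal.ofReal C * ∫⁻ t in Set.Ioc (0:ℝ) 3, ∫⁻ x in omegaSet, g (x + t) := by
  rcases lt_or_ge d 2 with hd | hd
  · -- use the component (−2,−1): s - t ∈ (−2,−1)
    set t0 : ℝ := max (d + 1) 0 with ht0
    set t1 : ℝ := min ((t0 + (c + 2)) / 2) 3 with ht1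
    have ht0d : t0 < c + 2 := max_lt (by linarith) (by linarith)
    have ht0l : d + 1 ≤ t0 := le_max_left _ _
    have h0 : 0 ≤ t0 := le_max_right _ _
    have ht03 : t0 < 3 := max_lt (by linarith) (by norm_num)
    have ht : t0 < t1 := lt_min (by linarith) ht03
    have h3 : t1 ≤ 3 := min_le_right _ _
    have ht1m : t1 ≤ (t0 + (c + 2)) / 2 := min_le_left _ _
    refine piece_core_add c d t0 t1 h0 ht h3 ?_
    intro s hs t htm
    exact Or.inl ⟨by have := htm.2; have := hs.1; linarith,
      by have := htm.1; have := hs.2; linarith⟩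
  · -- use the component (1,2): s - t ∈ (1,2)
    have hc1 : 1 < c := by linarith
    set t0 : ℝ := max (d - 2) 0 with ht0
    set t1 : ℝ := min ((t0 + (c - 1)) / 2) 3 with ht1
    have ht0d : t0 < c - 1 := max_lt (by linarith) (by linarith)
    have ht0l : d - 2 ≤ t0 := le_max_left _ _
    have h0 : 0 ≤ t0 := le_max_right _ _
    have ht03 : t0 < 3 := max_lt (by linarith) (by norm_num)
    have ht : t0 < t1 := lt_min (by linarith) ht03
    have h3 : t1 ≤ 3 := min_le_right _ _
    have ht1m : t1 ≤ (t0 + (c - 1)) / 2 := min_le_left _ _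
    refine piece_core_add c d t0 t1 h0 ht h3 ?_
    intro s hs t htm
    exact Or.inr ⟨by have := htm.2; have := hs.1; linarith,
      by have := htm.1; have := hs.2; linarith⟩

lemma half1 (a b : ℝ) (ha : -5 < a) (hab : a ≤ b) (hb : b < 2) :
    ∃ C : ℝ, 0 < C ∧ ∀ g : ℝ → ℝ≥0∞, Measurable g →
      ∫⁻ s in Set.Ioc a b, g s ≤
        ENNReal.ofReal C * ∫⁻ t in Set.Ioc (0:ℝ) 3, ∫⁻ x in omegaSet, g (x - t) := by
  have claim : ∀ k : ℕ, ∃ C : ℝ, 0 < C ∧ ∀ g : ℝ → ℝ≥0∞, Measurable g →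
      ∫⁻ s in Set.Ioc a (min (a + (k : ℝ) / 2) b), g s ≤
        ENNReal.ofReal C * ∫⁻ t in Set.Ioc (0:ℝ) 3, ∫⁻ x in omegaSet, g (x - t) := by
    intro k
    induction k with
    | zero =>
      refine ⟨1, one_pos, fun g hg => ?_⟩
      have : min (a + ((0 : ℕ) : ℝ) / 2) b = a := by
        rw [Nat.cast_zero, zero_div, add_zero, min_eq_left hab]
      rw [this, Set.Ioc_self]
      simp
    | succ k ih =>
      obtain ⟨C1, hC1, h1⟩ := ih
      set c : ℝ := min (a + (k : ℝ) / 2) b with hcdef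
      set d : ℝ := min (a + ((k + 1 : ℕ) : ℝ) / 2) b with hddef
      have hkk : (((k : ℕ) + 1 : ℕ) : ℝ) / 2 = (k : ℝ) / 2 + 1 / 2 := by
        push_cast; ring
      have hac : a ≤ c := le_min (le_add_of_nonneg_right (by positivity)) hab
      have hcd : c ≤ d := min_le_min (by rw [hkk]; linarith) le_rfl
      have hdb : d ≤ b := min_le_right _ _
      have hc5 : -5 < c := lt_of_lt_of_le ha hac
      have hd2 : d < 2 := lt_of_le_of_lt hdb hb
      have hlen : d ≤ c + 1 / 2 := by
        have : d ≤ min (a + (k : ℝ) / 2 + 1 / 2) (b + 1 / 2) :=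
          min_le_min (by rw [hkk]; linarith) (by linarith)
        rwa [min_add_add_right] at this
      obtain ⟨C2, hC2, h2⟩ := piece1 c d hc5 hcd hd2 hlen
      refine ⟨C1 + C2, by positivity, fun g hg => ?_⟩
      calc ∫⁻ s in Set.Ioc a d, g s
          = ∫⁻ s in Set.Ioc a c ∪ Set.Ioc c d, g s := by
            rw [Set.Ioc_union_Ioc_eq_Ioc hac hcd]
        _ ≤ (∫⁻ s in Set.Ioc a c, g s) + ∫⁻ s in Set.Ioc c d, g s :=
            lintegral_union_le _ _ _
        _ ≤ ENNReal.ofReal C1 * _ + ENNReal.ofReal C2 * _ :=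
            add_le_add (h1 g hg) (h2 g hg)
        _ = ENNReal.ofReal (C1 + C2) * _ := by
            rw [ENNReal.ofReal_add hC1.le hC2.le, add_mul]
  obtain ⟨C, hC, h⟩ := claim 14
  have hmin : min (a + ((14 : ℕ) : ℝ) / 2) b = b := by
    rw [min_eq_right]; push_cast; linarith
  rw [hmin] at h
  exact ⟨C, hC, h⟩

lemma half2 (a b : ℝ) (ha : -2 < a) (hab : a ≤ b) (hb : b < 5) :
    ∃ C : ℝ, 0 < C ∧ ∀ g : ℝ → ℝ≥0∞, Measurable g →
      ∫⁻ s in Set.Ioc a b, g s ≤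
        ENNReal.ofReal C * ∫⁻ t in Set.Ioc (0:ℝ) 3, ∫⁻ x in omegaSet, g (x + t) := by
  have claim : ∀ k : ℕ, ∃ C : ℝ, 0 < C ∧ ∀ g : ℝ → ℝ≥0∞, Measurable g →
      ∫⁻ s in Set.Ioc a (min (a + (k : ℝ) / 2) b), g s ≤
        ENNReal.ofReal C * ∫⁻ t in Set.Ioc (0:ℝ) 3, ∫⁻ x in omegaSet, g (x + t) := by
    intro k
    induction k with
    | zero =>
      refine ⟨1, one_pos, fun g hg => ?_⟩
      have : min (a + ((0 : ℕ) : ℝ) / 2) b = a := by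
        rw [Nat.cast_zero, zero_div, add_zero, min_eq_left hab]
      rw [this, Set.Ioc_self]
      simp
    | succ k ih =>
      obtain ⟨C1, hC1, h1⟩ := ih
      set c : ℝ := min (a + (k : ℝ) / 2) b with hcdef
      set d : ℝ := min (a + ((k + 1 : ℕ) : ℝ) / 2) b with hddef
      have hkk : (((k : ℕ) + 1 : ℕ) : ℝ) / 2 = (k : ℝ) / 2 + 1 / 2 := by
        push_cast; ring
      have hac : a ≤ c := le_min (le_add_of_nonneg_right (by positivity)) hab
      have hcd : c ≤ d := min_le_min (by rw [hkk]; linarith) le_rfl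
      have hdb : d ≤ b := min_le_right _ _
      have hc2 : -2 < c := lt_of_lt_of_le ha hac
      have hd5 : d < 5 := lt_of_le_of_lt hdb hb
      have hlen : d ≤ c + 1 / 2 := by
        have : d ≤ min (a + (k : ℝ) / 2 + 1 / 2) (b + 1 / 2) :=
          min_le_min (by rw [hkk]; linarith) (by linarith)
        rwa [min_add_add_right] at this
      obtain ⟨C2, hC2, h2⟩ := piece2 c d hc2 hcd hd5 hlen
      refine ⟨C1 + C2, by positivity, fun g hg => ?_⟩
      calc ∫⁻ s in Set.Ioc a d, g s
          = ∫⁻ s in Set.Ioc a c ∪ Set.Ioc c d, g s := by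
            rw [Set.Ioc_union_Ioc_eq_Ioc hac hcd]
        _ ≤ (∫⁻ s in Set.Ioc a c, g s) + ∫⁻ s in Set.Ioc c d, g s :=
            lintegral_union_le _ _ _
        _ ≤ ENNReal.ofReal C1 * _ + ENNReal.ofReal C2 * _ :=
            add_le_add (h1 g hg) (h2 g hg)
        _ = ENNReal.ofReal (C1 + C2) * _ := by
            rw [ENNReal.ofReal_add hC1.le hC2.le, add_mul]
  obtain ⟨C, hC, h⟩ := claim 14
  have hmin : min (a + ((14 : ℕ) : ℝ) / 2) b = b := by
    rw [min_eq_right]; push_cast; linarith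
  rw [hmin] at h
  exact ⟨C, hC, h⟩

theorem transport_observability_1d :
    (∀ a b : ℝ, -5 < a → a ≤ b → b < 2 →
      ∃ C : ℝ, 0 < C ∧
        ∀ W : ℝ → ℝ, Measurable W →
          ∫⁻ s in Set.Ioc a b, ENNReal.ofReal ((W s) ^ 2) ≤
            ENNReal.ofReal C *
              ∫⁻ t in Set.Ioc (0 : ℝ) 3,
                ∫⁻ x in omegaSet, ENNReal.ofReal ((W (x - t)) ^ 2)) ∧
    (∀ a b : ℝ, -2 < a → a ≤ b → b < 5 →
      ∃ C : ℝ, 0 < C ∧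
        ∀ W : ℝ → ℝ, Measurable W →
          ∫⁻ s in Set.Ioc a b, ENNReal.ofReal ((W s) ^ 2) ≤
            ENNReal.ofReal C *
              ∫⁻ t in Set.Ioc (0 : ℝ) 3,
                ∫⁻ x in omegaSet, ENNReal.ofReal ((W (x + t)) ^ 2)) := by
  constructor
  · intro a b ha hab hb
    obtain ⟨C, hC, h⟩ := half1 a b ha hab hb
    exact ⟨C, hC, fun W hW => h (fun s => ENNReal.ofReal ((W s) ^ 2))
      ((hW.pow_const 2).ennreal_ofReal)⟩
  · intro a b ha hab hb
    obtain ⟨C, hC, h⟩ := half2 a b ha hab hb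
    exact ⟨C, hC, fun W hW => h (fun s => ENNReal.ofReal ((W s) ^ 2))
      ((hW.pow_const 2).ennreal_ofReal)⟩
end

section
/- For every T with 0 < T < 3/2 there exists a function u : ℝ × ℝ → ℝ of class C^∞ that is a classical solution of the one-dimensional wave equation on [0,T]×[−1,1] with Dirichlet boundary conditions, whose initial data (u(0,·), ∂ₜu(0,·)) do not both vanish identically on [−1,1], and such that u(t,x) = 0 for all t ∈ [0,T] and all x ∈ ω = (−1,−3/4) ∪ (3/4,1). In particular, for 0 < T < 3/2 there is no constant C > 0 such that ∫_{−1}^{1} ( (∂ₓu(0,x))² + (∂ₜu(0,x))² ) dx ≤ C ∫_0^T ∫_ω (∂ₜu(t,x))² dx dt holds for all classical solutions. -/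
open MeasureTheory

/-- Partial derivative in time of a function of (time, space). -/
noncomputable def pdt (u : ℝ → ℝ → ℝ) : ℝ → ℝ → ℝ := fun t x => deriv (fun s => u s x) t

/-- Partial derivative in space of a function of (time, space). -/
noncomputable def pdx (u : ℝ → ℝ → ℝ) : ℝ → ℝ → ℝ := fun t x => deriv (fun y => u t y) x

/-!
The right-moving wave `u t x = φ (x - t)` solves the wave equation for every smooth `φ`. If `φ`
is a bump supported in `[-3/4, 3/4 - T]`, an interval that is nondegenerate exactly when
`T < 3/2`, then for `t ∈ [0, T]` the support of `u t` lies in `[-3/4, 3/4]`: the wave never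
reaches `ω` or the boundary. Its observation on `(0, T) × ω` therefore vanishes, while its
initial energy `2 ∫ φ'²` is positive, so no observability constant can exist.
-/

open Set Function

def travelingWave (φ : ℝ → ℝ) : ℝ → ℝ → ℝ := fun t x => φ (x - t)

section TravelingWave

variable (φ : ℝ → ℝ)

lemma pdt_travelingWave : pdt (travelingWave φ) = travelingWave (-deriv φ) := by
  ext t x
  exact deriv_comp_const_sub φ x t

lemma pdx_travelingWave : pdx (travelingWave φ) = travelingWave (deriv φ) := by
  ext t x
  exact deriv_comp_sub_const φ t x

lemma pdt_pdt_travelingWave : pdt (pdt (travelingWave φ)) = pdx (pdx (travelingWave φ)) := by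
  rw [pdt_travelingWave, pdt_travelingWave, pdx_travelingWave, pdx_travelingWave, deriv.neg']
  congr 1
  exact funext fun x => neg_neg _

lemma pdx_sq_add_pdt_sq_travelingWave (t x : ℝ) :
    pdx (travelingWave φ) t x ^ 2 + pdt (travelingWave φ) t x ^ 2 = 2 * deriv φ (x - t) ^ 2 := by
  simp only [pdx_travelingWave, pdt_travelingWave, travelingWave, Pi.neg_apply, neg_sq]
  ring

variable {φ}

lemma contDiff_uncurry_travelingWave {n : WithTop ℕ∞} (hφ : ContDiff ℝ n φ) :
    ContDiff ℝ n (uncurry (travelingWave φ)) :=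
  hφ.comp (contDiff_snd.sub contDiff_fst)

lemma travelingWave_eq_zero_of_notMem_Icc {a b T t x : ℝ} (hφ : tsupport φ ⊆ Icc a (b - T))
    (ht : t ∈ Icc 0 T) (hx : x ∉ Icc a b) : travelingWave φ t x = 0 := by
  refine image_eq_zero_of_notMem_tsupport (f := φ) fun hxt => hx ?_
  obtain ⟨h₁, h₂⟩ := hφ hxt
  exact ⟨by linarith [ht.1], by linarith [ht.2]⟩

lemma integral_pdt_sq_travelingWave_eq_zero {a b T : ℝ} {s : Set ℝ}
    (hφ : tsupport φ ⊆ Icc a (b - T)) (hs : Disjoint s (Icc a b)) :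
    ∫ t in Ioo 0 T, ∫ x in s, pdt (travelingWave φ) t x ^ 2 = 0 := by
  have hφ' : tsupport (-deriv φ) ⊆ Icc a (b - T) :=
    (tsupport_neg _).trans_subset (tsupport_deriv_subset.trans hφ)
  refine setIntegral_eq_zero_of_forall_eq_zero fun t ht => setIntegral_eq_zero_of_forall_eq_zero
    fun x hx => ?_
  rw [pdt_travelingWave, travelingWave_eq_zero_of_notMem_Icc hφ' (Ioo_subset_Icc_self ht)
    (disjoint_left.1 hs hx), sq, zero_mul]

end TravelingWave

lemma HasCompactSupport.exists_deriv_ne_zero {φ : ℝ → ℝ} (hφ : HasCompactSupport φ)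
    (hd : Differentiable ℝ φ) {x₀ : ℝ} (hx₀ : φ x₀ ≠ 0) : ∃ x, deriv φ x ≠ 0 := by
  by_contra! h
  obtain ⟨R, -, hR⟩ := hφ.exists_pos_le_norm
  refine hx₀ ?_
  rw [is_const_of_deriv_eq_zero hd h x₀ R]
  exact hR R (le_abs_self R)

lemma HasCompactSupport.setIntegral_deriv_sq_pos {φ : ℝ → ℝ} (hφ : ContDiff ℝ 1 φ)
    (hcpt : HasCompactSupport φ) {x₀ : ℝ} (hx₀ : φ x₀ ≠ 0) {s : Set ℝ} (hs : tsupport φ ⊆ s) :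
    0 < ∫ x in s, deriv φ x ^ 2 := by
  obtain ⟨x₁, hx₁⟩ := hcpt.exists_deriv_ne_zero (hφ.differentiable one_ne_zero) hx₀
  rw [setIntegral_eq_integral_of_forall_compl_eq_zero fun x hx => ?_]
  · exact Continuous.integral_pos_of_hasCompactSupport_nonneg_nonzero
      ((hφ.continuous_deriv le_rfl).pow 2) (hcpt.deriv.comp_left (g := fun y => y ^ 2) (by simp))
      (fun x => sq_nonneg _) (pow_ne_zero 2 hx₁)
  · rw [image_eq_zero_of_notMem_tsupport fun h => hx (hs (tsupport_deriv_subset h)), sq, zero_mul]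

theorem no_observability_below_threshold (T : ℝ) (hT0 : 0 < T) (hT : T < 3 / 2) :
    -- there is an invisible smooth solution with nontrivial initial data
    (∃ u : ℝ → ℝ → ℝ,
      ContDiff ℝ (⊤ : ℕ∞) (Function.uncurry u) ∧
      (∀ t ∈ Set.Icc (0 : ℝ) T, ∀ x ∈ Set.Icc (-1 : ℝ) 1,
        pdt (pdt u) t x = pdx (pdx u) t x) ∧
      (∀ t ∈ Set.Icc (0 : ℝ) T, u t (-1) = 0 ∧ u t 1 = 0) ∧
      ¬ (∀ x ∈ Set.Icc (-1 : ℝ) 1, u 0 x = 0 ∧ pdt u 0 x = 0) ∧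
      (∀ t ∈ Set.Icc (0 : ℝ) T,
        ∀ x ∈ (Set.Ioo (-1 : ℝ) (-3 / 4) ∪ Set.Ioo (3 / 4 : ℝ) 1), u t x = 0)) ∧
    -- in particular, no observability constant exists for all classical solutions
    ¬ (∃ C : ℝ, 0 < C ∧
        ∀ u : ℝ → ℝ → ℝ,
          ContDiffOn ℝ 2 (Function.uncurry u) (Set.Icc 0 T ×ˢ Set.Icc (-1 : ℝ) 1) →
          (∀ t ∈ Set.Icc (0 : ℝ) T, ∀ x ∈ Set.Icc (-1 : ℝ) 1,
            pdt (pdt u) t x = pdx (pdx u) t x) →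
          (∀ t ∈ Set.Icc (0 : ℝ) T, u t (-1) = 0 ∧ u t 1 = 0) →
          ∫ x in Set.Ioo (-1 : ℝ) 1, ((pdx u 0 x) ^ 2 + (pdt u 0 x) ^ 2) ≤
            C * ∫ t in Set.Ioo (0 : ℝ) T,
                  ∫ x in (Set.Ioo (-1 : ℝ) (-3 / 4) ∪ Set.Ioo (3 / 4 : ℝ) 1),
                    (pdt u t x) ^ 2) := by
  obtain ⟨φ, hsupp, hcpt, hφ, -, hφ1⟩ := exists_contDiff_tsupport_subset (n := ⊤)
    (Icc_mem_nhds (show (-3 / 4 : ℝ) < -T / 2 by linarith) (show -T / 2 < 3 / 4 - T by linarith))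
  set u := travelingWave φ
  have hω : Disjoint (Ioo (-1 : ℝ) (-3 / 4) ∪ Ioo (3 / 4) 1) (Icc (-3 / 4) (3 / 4)) := by
    refine disjoint_left.2 ?_
    rintro x (⟨-, hx⟩ | ⟨hx, -⟩) ⟨h₁, h₂⟩ <;> linarith
  have hvanish : ∀ t ∈ Icc (0 : ℝ) T, ∀ x ∉ Icc (-3 / 4 : ℝ) (3 / 4), u t x = 0 :=
    fun t ht x hx => travelingWave_eq_zero_of_notMem_Icc (b := 3 / 4) hsupp ht hx
  have hwave : ∀ t ∈ Icc (0 : ℝ) T, ∀ x ∈ Icc (-1 : ℝ) 1, pdt (pdt u) t x = pdx (pdx u) t x :=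
    fun t _ x _ => by rw [pdt_pdt_travelingWave]
  have hbc : ∀ t ∈ Icc (0 : ℝ) T, u t (-1) = 0 ∧ u t 1 = 0 := fun t ht =>
    ⟨hvanish t ht _ (by norm_num), hvanish t ht _ (by norm_num)⟩
  have hinit : ¬ ∀ x ∈ Icc (-1 : ℝ) 1, u 0 x = 0 ∧ pdt u 0 x = 0 := fun h => by
    simpa [u, travelingWave, hφ1] using (h (-T / 2) ⟨by linarith, by linarith⟩).1
  have hφ2 : ContDiff ℝ 2 φ := hφ.of_le (WithTop.coe_le_coe.2 le_top)
  refine ⟨⟨u, contDiff_uncurry_travelingWave hφ, hwave, hbc, hinit,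
    fun t ht x hx => hvanish t ht x (disjoint_left.1 hω hx)⟩, ?_⟩
  rintro ⟨C, -, hobs⟩
  have hobserved := hobs u (contDiff_uncurry_travelingWave hφ2).contDiffOn hwave hbc
  rw [integral_pdt_sq_travelingWave_eq_zero hsupp hω, mul_zero] at hobserved
  refine hobserved.not_gt ?_
  simp only [u, pdx_sq_add_pdt_sq_travelingWave, sub_zero, integral_const_mul]
  exact mul_pos two_pos <| hcpt.setIntegral_deriv_sq_pos (hφ2.of_le one_le_two)
    (hφ1.trans_ne one_ne_zero) (hsupp.trans (Icc_subset_Ioo (by norm_num) (by linarith)))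
end

section
/- For every T with 0 < T < 1 there exists a function u : ℝ × ℝ → ℝ of class C^∞ that is a classical solution of the one-dimensional wave equation on [0,T]×[−1,1] with Dirichlet boundary conditions, whose initial data are supported in [−1/4,1/4] and do not both vanish identically on [−1,1], and such that u(t,x) = 0 for all t ∈ [0,T] and all x ∈ ω = (−1,−3/4) ∪ (3/4,1). In particular, the threshold T = 1 in the localized observability result is sharp: for T < 1 no observability constant exists even for initial data supported in [−1/4,1/4]. -/
/-!
The left-moving wave `u t x = g (x + t)`, with `g` a bump supported in `(T/2 - 1/4, 1/4)`, has
initial data in `[-1/4, 1/4]`, and for `0 ≤ t ≤ T < 1` its support `(T/2 - 1/4 - t, 1/4 - t)` stays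
away from `x = ±1` and from `ω = (-1, -3/4) ∪ (3/4, 1)`. So the observed energy of this nontrivial
solution vanishes, whereas nontrivial initial data with `u 0 (-1) = 0` and `∂ₜu 0 (±1) = 0` have
positive energy, by the mean value theorem.
-/

open MeasureTheory

open Set Function Filter Topology

def leftTravelingWave (g : ℝ → ℝ) : ℝ → ℝ → ℝ := fun t x => g (x + t)

theorem pdt_leftTravelingWave (g : ℝ → ℝ) :
    pdt (leftTravelingWave g) = leftTravelingWave (deriv g) := by
  ext t x
  exact deriv_comp_const_add g x t

theorem pdx_leftTravelingWave (g : ℝ → ℝ) :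
    pdx (leftTravelingWave g) = leftTravelingWave (deriv g) := by
  ext t x
  exact deriv_comp_add_const g t x

theorem pdt_pdt_leftTravelingWave (g : ℝ → ℝ) :
    pdt (pdt (leftTravelingWave g)) = pdx (pdx (leftTravelingWave g)) := by
  simp only [pdt_leftTravelingWave, pdx_leftTravelingWave]

theorem contDiff_uncurry_leftTravelingWave {n : WithTop ℕ∞} {g : ℝ → ℝ} (hg : ContDiff ℝ n g) :
    ContDiff ℝ n (uncurry (leftTravelingWave g)) :=
  hg.comp (contDiff_snd.add contDiff_fst)

theorem leftTravelingWave_eq_zero {g : ℝ → ℝ} {t x : ℝ} (h : x + t ∉ tsupport g) :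
    leftTravelingWave g t x = 0 :=
  image_eq_zero_of_notMem_tsupport (f := g) h

theorem pdt_leftTravelingWave_eq_zero {g : ℝ → ℝ} {t x : ℝ} (h : x + t ∉ tsupport g) :
    pdt (leftTravelingWave g) t x = 0 := by
  rw [pdt_leftTravelingWave]
  exact image_eq_zero_of_notMem_tsupport (f := deriv g) fun h' => h (tsupport_deriv_subset h')

theorem exists_invisible_solution {T : ℝ} (hT0 : 0 < T) (hT : T < 1) :
    ∃ u : ℝ → ℝ → ℝ,
      ContDiff ℝ (⊤ : ℕ∞) (uncurry u) ∧
      (∀ t ∈ Icc (0 : ℝ) T, ∀ x ∈ Icc (-1 : ℝ) 1, pdt (pdt u) t x = pdx (pdx u) t x) ∧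
      (∀ t ∈ Icc (0 : ℝ) T, u t (-1) = 0 ∧ u t 1 = 0) ∧
      (∀ x : ℝ, 1 / 4 ≤ |x| → |x| ≤ 1 → u 0 x = 0 ∧ pdt u 0 x = 0) ∧
      ¬ (∀ x ∈ Icc (-1 : ℝ) 1, u 0 x = 0 ∧ pdt u 0 x = 0) ∧
      (∀ t ∈ Icc (0 : ℝ) T, ∀ x ∈ Ioo (-1 : ℝ) (-3 / 4) ∪ Ioo (3 / 4 : ℝ) 1, u t x = 0) := by
  obtain ⟨g, hg_supp, -, hg, -, hg_one⟩ := exists_contDiff_tsupport_subset (n := ⊤) (x := T / 4)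
    (Ioo_mem_nhds (a := T / 2 - 1 / 4) (b := 1 / 4) (by linarith) (by linarith))
  have hvanish : ∀ {t x : ℝ}, x + t ≤ T / 2 - 1 / 4 ∨ 1 / 4 ≤ x + t →
      leftTravelingWave g t x = 0 ∧ pdt (leftTravelingWave g) t x = 0 := by
    intro t x h
    have hout : x + t ∉ tsupport g := fun hmem => by
      obtain ⟨h₁, h₂⟩ := hg_supp hmem
      rcases h with h | h <;> linarith
    exact ⟨leftTravelingWave_eq_zero hout, pdt_leftTravelingWave_eq_zero hout⟩
  refine ⟨leftTravelingWave g, contDiff_uncurry_leftTravelingWave hg,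
    fun t _ x _ => congrFun₂ (pdt_pdt_leftTravelingWave g) t x, ?_, ?_, ?_, ?_⟩
  · rintro t ⟨ht0, htT⟩
    exact ⟨(hvanish (.inl (by linarith))).1, (hvanish (.inr (by linarith))).1⟩
  · intro x hx _
    apply hvanish
    rcases le_abs'.1 hx with hx | hx
    exacts [.inl (by linarith), .inr (by linarith)]
  · intro h
    have := (h (T / 4) ⟨by linarith, by linarith⟩).1
    simp [leftTravelingWave, hg_one] at this
  · rintro t ⟨ht0, htT⟩ x (⟨-, hx⟩ | ⟨hx, -⟩)
    exacts [(hvanish (.inl (by linarith))).1, (hvanish (.inr (by linarith))).1]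

theorem integral_pdt_sq_eq_zero_of_eq_zero {u : ℝ → ℝ → ℝ} {a b : ℝ} {ω : Set ℝ}
    (h : ∀ t ∈ Icc a b, ∀ x ∈ ω, u t x = 0) :
    ∫ t in Ioo a b, ∫ x in ω, pdt u t x ^ 2 = 0 := by
  refine setIntegral_eq_zero_of_forall_eq_zero fun t ht =>
    setIntegral_eq_zero_of_forall_eq_zero fun x hx => ?_
  have hloc : (fun s => u s x) =ᶠ[𝓝 t] fun _ => 0 :=
    eventually_of_mem (Icc_mem_nhds ht.1 ht.2) fun s hs => h s hs x hx
  simp [pdt, hloc.deriv_eq]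

theorem continuous_pdt {u : ℝ → ℝ → ℝ} (hu : ContDiff ℝ 1 (uncurry u)) (t : ℝ) :
    Continuous (pdt u t) := by
  have hpdt : pdt u t = fun x => fderiv ℝ (uncurry u) (t, x) (1, 0) := by
    ext x
    have hu' := (hu.differentiable one_ne_zero (t, x)).hasFDerivAt
    exact (hu'.comp_hasDerivAt t ((hasDerivAt_id' t).prodMk (hasDerivAt_const t x))).deriv
  rw [hpdt]
  exact ((hu.continuous_fderiv one_ne_zero).comp (Continuous.prodMk_right t)).clm_apply
    continuous_const

theorem setIntegral_Ioo_pos_of_continuous {F : ℝ → ℝ} {a b ξ : ℝ} (hF : Continuous F)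
    (hF_nonneg : 0 ≤ F) (hξ : ξ ∈ Ioo a b) (hFξ : F ξ ≠ 0) : 0 < ∫ x in Ioo a b, F x := by
  rw [setIntegral_pos_iff_support_of_nonneg_ae (.of_forall hF_nonneg)
    (hF.integrableOn_Icc.mono_set Ioo_subset_Icc_self)]
  exact (hF.isOpen_support.inter isOpen_Ioo).measure_pos volume ⟨ξ, hFξ, hξ⟩

theorem setIntegral_deriv_sq_add_sq_pos {f v : ℝ → ℝ} {a b : ℝ} (hf : ContDiff ℝ 1 f)
    (hv : Continuous v) (hfa : f a = 0) (hva : v a = 0) (hvb : v b = 0)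
    (hne : ¬ ∀ x ∈ Icc a b, f x = 0 ∧ v x = 0) :
    0 < ∫ x in Ioo a b, deriv f x ^ 2 + v x ^ 2 := by
  suffices ∃ ξ ∈ Ioo a b, deriv f ξ ≠ 0 ∨ v ξ ≠ 0 by
    obtain ⟨ξ, hξ, hξ_ne⟩ := this
    have hF : Continuous fun x => deriv f x ^ 2 + v x ^ 2 := by
      have := hf.continuous_deriv le_rfl
      fun_prop
    refine setIntegral_Ioo_pos_of_continuous hF (fun x => by positivity) hξ ?_
    rcases hξ_ne with h | h <;> positivity
  push Not at hne
  obtain ⟨x, ⟨hax, hxb⟩, hx⟩ := hne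
  by_cases hfx : f x = 0
  · have hvx := hx hfx
    refine ⟨x, ⟨hax.lt_of_ne ?_, hxb.lt_of_ne ?_⟩, .inr hvx⟩ <;> rintro rfl <;> contradiction
  · have hax' : a < x := hax.lt_of_ne (by rintro rfl; contradiction)
    obtain ⟨ξ, hξ, hslope⟩ := exists_deriv_eq_slope f hax' hf.continuous.continuousOn
      (hf.differentiable one_ne_zero).differentiableOn
    refine ⟨ξ, ⟨hξ.1, hξ.2.trans_le hxb⟩, .inl ?_⟩
    rw [hslope, hfa, sub_zero]
    exact div_ne_zero hfx (sub_ne_zero.2 hax'.ne')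

theorem sharpness_of_localized_threshold (T : ℝ) (hT0 : 0 < T) (hT : T < 1) :
    -- there is an invisible smooth solution with nontrivial initial data
    -- supported in [−1/4, 1/4]
    (∃ u : ℝ → ℝ → ℝ,
      ContDiff ℝ (⊤ : ℕ∞) (Function.uncurry u) ∧
      (∀ t ∈ Set.Icc (0 : ℝ) T, ∀ x ∈ Set.Icc (-1 : ℝ) 1,
        pdt (pdt u) t x = pdx (pdx u) t x) ∧
      (∀ t ∈ Set.Icc (0 : ℝ) T, u t (-1) = 0 ∧ u t 1 = 0) ∧
      (∀ x : ℝ, 1 / 4 ≤ |x| → |x| ≤ 1 → u 0 x = 0 ∧ pdt u 0 x = 0) ∧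
      ¬ (∀ x ∈ Set.Icc (-1 : ℝ) 1, u 0 x = 0 ∧ pdt u 0 x = 0) ∧
      (∀ t ∈ Set.Icc (0 : ℝ) T,
        ∀ x ∈ (Set.Ioo (-1 : ℝ) (-3 / 4) ∪ Set.Ioo (3 / 4 : ℝ) 1), u t x = 0)) ∧
    -- in particular, no observability constant exists even for initial data
    -- supported in [−1/4, 1/4]
    ¬ (∃ C : ℝ, 0 < C ∧
        ∀ u : ℝ → ℝ → ℝ,
          ContDiffOn ℝ 2 (Function.uncurry u) (Set.Icc 0 T ×ˢ Set.Icc (-1 : ℝ) 1) →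
          (∀ t ∈ Set.Icc (0 : ℝ) T, ∀ x ∈ Set.Icc (-1 : ℝ) 1,
            pdt (pdt u) t x = pdx (pdx u) t x) →
          (∀ t ∈ Set.Icc (0 : ℝ) T, u t (-1) = 0 ∧ u t 1 = 0) →
          (∀ x : ℝ, 1 / 4 ≤ |x| → |x| ≤ 1 → u 0 x = 0 ∧ pdt u 0 x = 0) →
          ∫ x in Set.Ioo (-1 : ℝ) 1, ((pdx u 0 x) ^ 2 + (pdt u 0 x) ^ 2) ≤
            C * ∫ t in Set.Ioo (0 : ℝ) T,
                  ∫ x in (Set.Ioo (-1 : ℝ) (-3 / 4) ∪ Set.Ioo (3 / 4 : ℝ) 1),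
                    (pdt u t x) ^ 2) := by
  obtain ⟨u, hu, hwave, hbc, hsupp, hne, hinv⟩ := exists_invisible_solution hT0 hT
  refine ⟨⟨u, hu, hwave, hbc, hsupp, hne, hinv⟩, ?_⟩
  rintro ⟨C, -, hobs⟩
  have hu₁ : ContDiff ℝ 1 (uncurry u) := hu.of_le (by norm_cast)
  have hobserved := hobs u (hu.of_le (by norm_cast)).contDiffOn hwave hbc hsupp
  rw [integral_pdt_sq_eq_zero_of_eq_zero hinv, mul_zero] at hobserved
  have henergy : 0 < ∫ x in Ioo (-1 : ℝ) 1, ((pdx u 0 x) ^ 2 + (pdt u 0 x) ^ 2) :=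
    setIntegral_deriv_sq_add_sq_pos (hu₁.comp (contDiff_const.prodMk contDiff_id))
      (continuous_pdt hu₁ 0) (hbc 0 ⟨le_rfl, hT0.le⟩).1
      (hsupp (-1) (by norm_num) (by norm_num)).2 (hsupp 1 (by norm_num) (by norm_num)).2 hne
  exact henergy.not_ge hobserved
end

section
/- Let T > 1. Every classical solution u of the one-dimensional wave equation on [0,T]×[−1,1] with Dirichlet boundary conditions whose initial data are supported in [−1/4,1/4] and which satisfies ∂ₜu(t,x) = 0 for all t ∈ (0,T) and all x ∈ ω = (−1,−3/4) ∪ (3/4,1) vanishes identically on [0,T]×[−1,1]. -/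
open MeasureTheory

/-!
For `σ = ±1` the derivative `∂ₜu + σ ∂ₓu` of a solution of the wave equation is constant along
the characteristic lines `t + σ x = c`. As `∂ₜu = 0` on `(0,T) × ω` and `u(0,·) = 0` there, `u`
vanishes on `(0,T) × ω`, so both derivatives vanish at every point whose characteristic meets
`(0,T) × ω`. Since `T > 1`, every other characteristic has `c ∈ (1/4, 3/4]` and starts at
`(0, σ c)`, near which `u(0,·)` vanishes. Close to that point the derivative of the other family
vanishes, so `∂ₓu = (σ/2) (∂ₜu + σ ∂ₓu)` is constant along the characteristic; continuity of
`∂ₓu` up to `t = 0`, where it is `0`, makes the constant `0`. Hence `∇u = 0` in the open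
rectangle, and `u = 0` because it vanishes on `(0,T) × ω`.
-/

open Set Filter Topology Function

section Calculus

variable {F : Type*} [NormedAddCommGroup F] [NormedSpace ℝ F]

theorem HasFDerivAt.hasDerivAt_comp_prodMk_left {f : ℝ × ℝ → F} {L : ℝ × ℝ →L[ℝ] F}
    {t x : ℝ} (h : HasFDerivAt f L (t, x)) : HasDerivAt (fun s => f (s, x)) (L (1, 0)) t :=
  h.comp_hasDerivAt t ((hasDerivAt_id t).prodMk (hasDerivAt_const t x))

theorem HasFDerivAt.hasDerivAt_comp_prodMk_right {f : ℝ × ℝ → F} {L : ℝ × ℝ →L[ℝ] F}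
    {t x : ℝ} (h : HasFDerivAt f L (t, x)) : HasDerivAt (fun y => f (t, y)) (L (0, 1)) x :=
  h.comp_hasDerivAt x ((hasDerivAt_const x t).prodMk (hasDerivAt_id x))

theorem Icc_prod_Icc_mem_nhds {a b c d : ℝ} {z : ℝ × ℝ} (hz : z ∈ Ioo a b ×ˢ Ioo c d) :
    Icc a b ×ˢ Icc c d ∈ 𝓝 z :=
  mem_of_superset ((isOpen_Ioo.prod isOpen_Ioo).mem_nhds hz)
    (prod_mono Ioo_subset_Icc_self Ioo_subset_Icc_self)

theorem eq_of_continuousOn_of_hasDerivAt_zero {g : ℝ → ℝ} {a b : ℝ} (hab : a ≤ b)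
    (hg : ContinuousOn g (Icc a b)) (hg' : ∀ s ∈ Ioo a b, HasDerivAt g 0 s) : g b = g a := by
  rcases hab.eq_or_lt with rfl | hab
  · rfl
  obtain ⟨c, -, hc⟩ := exists_hasDerivAt_eq_slope g (fun _ => 0) hab hg hg'
  rw [eq_comm, div_eq_zero_iff, sub_eq_zero] at hc
  exact hc.resolve_right (sub_ne_zero.2 hab.ne')

theorem HasFDerivWithinAt.apply_zero_one_eq_zero_of_slice_eq_zero {f : ℝ × ℝ → F}
    {L : ℝ × ℝ →L[ℝ] F} {S : Set ℝ} {t y p q : ℝ}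
    (hf : HasFDerivWithinAt f L (S ×ˢ Icc p q) (t, y)) (ht : t ∈ S) (hpq : p < q)
    (hy : y ∈ Icc p q) (h0 : ∀ y' ∈ Icc p q, f (t, y') = 0) : L (0, 1) = 0 := by
  have h₁ : HasDerivWithinAt (fun y' => f (t, y')) (L (0, 1)) (Icc p q) y :=
    hf.comp_hasDerivWithinAt y ((hasDerivAt_const y t).prodMk (hasDerivAt_id y)).hasDerivWithinAt
      fun y' hy' => ⟨ht, hy'⟩
  have h₂ : HasDerivWithinAt (fun y' => f (t, y')) 0 (Icc p q) y :=
    (hasDerivWithinAt_const y _ 0).congr h0 (h0 y hy)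
  exact (uniqueDiffOn_Icc hpq y hy).eq_deriv _ h₁ h₂

end Calculus

section PartialDerivatives

variable {u : ℝ → ℝ → ℝ} {t x : ℝ}

theorem pdt_eq_fderiv (h : DifferentiableAt ℝ (uncurry u) (t, x)) :
    pdt u t x = fderiv ℝ (uncurry u) (t, x) (1, 0) :=
  h.hasFDerivAt.hasDerivAt_comp_prodMk_left.deriv

theorem pdx_eq_fderiv (h : DifferentiableAt ℝ (uncurry u) (t, x)) :
    pdx u t x = fderiv ℝ (uncurry u) (t, x) (0, 1) :=
  h.hasFDerivAt.hasDerivAt_comp_prodMk_right.deriv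

theorem pdt_pdt_eq_fderiv_fderiv (h : ContDiffAt ℝ 2 (uncurry u) (t, x)) :
    pdt (pdt u) t x = fderiv ℝ (fderiv ℝ (uncurry u)) (t, x) (1, 0) (1, 0) := by
  have hpdt : (fun s => pdt u s x) =ᶠ[𝓝 t] fun s => fderiv ℝ (uncurry u) (s, x) (1, 0) :=
    ((continuous_id.prodMk continuous_const).continuousAt.eventually
      (h.eventually (by simp))).mono fun s hs => pdt_eq_fderiv (hs.differentiableAt (by simp))
  have h₂ := ((h.fderiv_right (m := 1) (by norm_num)).differentiableAt one_ne_zero).hasFDerivAt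
  exact hpdt.deriv_eq.trans
    ((ContinuousLinearMap.apply ℝ ℝ ((1 : ℝ), (0 : ℝ))).hasFDerivAt.comp_hasDerivAt t
      h₂.hasDerivAt_comp_prodMk_left).deriv

theorem pdx_pdx_eq_fderiv_fderiv (h : ContDiffAt ℝ 2 (uncurry u) (t, x)) :
    pdx (pdx u) t x = fderiv ℝ (fderiv ℝ (uncurry u)) (t, x) (0, 1) (0, 1) := by
  have hpdx : (fun y => pdx u t y) =ᶠ[𝓝 x] fun y => fderiv ℝ (uncurry u) (t, y) (0, 1) :=
    ((continuous_const.prodMk continuous_id).continuousAt.eventually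
      (h.eventually (by simp))).mono fun y hy => pdx_eq_fderiv (hy.differentiableAt (by simp))
  have h₂ := ((h.fderiv_right (m := 1) (by norm_num)).differentiableAt one_ne_zero).hasFDerivAt
  exact hpdx.deriv_eq.trans
    ((ContinuousLinearMap.apply ℝ ℝ ((0 : ℝ), (1 : ℝ))).hasFDerivAt.comp_hasDerivAt x
      h₂.hasDerivAt_comp_prodMk_right).deriv

theorem eq_zero_of_pdt_eq_zero {T : ℝ} {A : Set ℝ} (hA : A ⊆ Ioo (-1) 1)
    (hreg : ContDiffOn ℝ 2 (uncurry u) (Icc 0 T ×ˢ Icc (-1) 1)) (hinit : ∀ x ∈ A, u 0 x = 0)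
    (hpdt : ∀ t ∈ Ioo 0 T, ∀ x ∈ A, pdt u t x = 0) : ∀ z ∈ Ioo 0 T ×ˢ A, uncurry u z = 0 := by
  rintro ⟨t, x⟩ ⟨ht, hx⟩
  rw [uncurry_apply_pair, ← hinit x hx]
  refine eq_of_continuousOn_of_hasDerivAt_zero (g := fun s => u s x) ht.1.le ?_ fun s hs => ?_
  · exact hreg.continuousOn.comp (continuous_id.prodMk continuous_const).continuousOn
      fun s hs => ⟨⟨hs.1, hs.2.trans ht.2.le⟩, Ioo_subset_Icc_self (hA hx)⟩
  · have hs' : (s, x) ∈ Ioo 0 T ×ˢ Ioo (-1) 1 := ⟨⟨hs.1, hs.2.trans ht.2⟩, hA hx⟩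
    have hd := (hreg.contDiffAt (Icc_prod_Icc_mem_nhds hs')).differentiableAt two_ne_zero
    rw [← hpdt s hs'.1 x hx, pdt_eq_fderiv hd]
    exact hd.hasFDerivAt.hasDerivAt_comp_prodMk_left

end PartialDerivatives

section Characteristics

variable {F : Type*} [NormedAddCommGroup F] [NormedSpace ℝ F]

theorem ContinuousLinearMap.apply_characteristic_eq_zero {B : ℝ × ℝ →L[ℝ] ℝ × ℝ →L[ℝ] F}
    (hsymm : B (1, 0) (0, 1) = B (0, 1) (1, 0)) (hwave : B (1, 0) (1, 0) = B (0, 1) (0, 1))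
    {σ : ℝ} (hσ : σ * σ = 1) : B (1, -σ) (1, σ) = 0 := by
  have e₁ : ((1 : ℝ), -σ) = ((1 : ℝ), (0 : ℝ)) - σ • ((0 : ℝ), (1 : ℝ)) := by simp
  have e₂ : ((1 : ℝ), σ) = ((1 : ℝ), (0 : ℝ)) + σ • ((0 : ℝ), (1 : ℝ)) := by simp
  rw [e₁, e₂]
  simp only [map_sub, map_add, map_smul, sub_apply, smul_apply, hsymm, hwave]
  linear_combination (norm := module) -(hσ • B (0, 1) (0, 1))

theorem fderiv_apply_add_smul_eq_of_wave {f : ℝ × ℝ → F} {U : Set (ℝ × ℝ)} (hU : IsOpen U)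
    (hUc : Convex ℝ U) (hf : ContDiffOn ℝ 2 f U)
    (hwave : ∀ z ∈ U,
      fderiv ℝ (fderiv ℝ f) z (1, 0) (1, 0) = fderiv ℝ (fderiv ℝ f) z (0, 1) (0, 1))
    {σ : ℝ} (hσ : σ * σ = 1) {z : ℝ × ℝ} {s : ℝ} (hz : z ∈ U) (hzs : z + s • (1, -σ) ∈ U) :
    fderiv ℝ f (z + s • (1, -σ)) (1, σ) = fderiv ℝ f z (1, σ) := by
  set v : ℝ × ℝ := (1, -σ)
  set I : Set ℝ := (fun r => z + r • v) ⁻¹' U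
  have hI : Convex ℝ I :=
    (hUc.translate_preimage_right z).is_linear_preimage (IsLinearMap.isLinearMap_smul' v)
  have hderiv : ∀ r ∈ I, HasDerivWithinAt (fun r => fderiv ℝ f (z + r • v) (1, σ)) 0 I r := by
    intro r hr
    have hfr := hf.contDiffAt (hU.mem_nhds hr)
    have h₂ := ((hfr.fderiv_right (m := 1) (by norm_num)).differentiableAt one_ne_zero).hasFDerivAt
    have hline : HasDerivAt (fun r : ℝ => z + r • v) v r := by
      simpa using ((hasDerivAt_id r).smul_const v).const_add z
    rw [← ContinuousLinearMap.apply_characteristic_eq_zero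
      (hfr.isSymmSndFDerivAt (by simp) _ _) (hwave _ hr) hσ]
    exact ((ContinuousLinearMap.apply ℝ F ((1 : ℝ), σ)).hasFDerivAt.comp_hasDerivAt r
      (h₂.comp_hasDerivAt r hline)).hasDerivWithinAt
  have := hI.norm_image_sub_le_of_norm_hasDerivWithin_le hderiv (fun _ _ => le_of_eq norm_zero)
    (x := 0) (y := s) (by simpa [I] using hz) hzs
  simpa [sub_eq_zero] using this

end Characteristics

local notation "ω" => Ioo (-1 : ℝ) (-3 / 4) ∪ Ioo (3 / 4 : ℝ) 1

theorem mul_mem_of_forall_neg_mem {S : Set ℝ} (hS : ∀ w ∈ S, -w ∈ S) {σ w : ℝ}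
    (hσ : σ * σ = 1) (hw : w ∈ S) : σ * w ∈ S := by
  rcases mul_self_eq_one_iff.mp hσ with rfl | rfl
  · simpa using hw
  · simpa using hS w hw

theorem neg_mem_observation {w : ℝ} (hw : w ∈ ω) : -w ∈ ω :=
  hw.elim (fun h => Or.inr ⟨by linarith [h.2], by linarith [h.1]⟩)
    (fun h => Or.inl ⟨by linarith [h.2], by linarith [h.1]⟩)

theorem observation_subset_Ioo : ω ⊆ Ioo (-1) 1 :=
  union_subset (Ioo_subset_Ioo_right (by norm_num)) (Ioo_subset_Ioo_left (by norm_num))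

theorem abs_mem_Icc_of_mem_observation {w : ℝ} (hw : w ∈ ω) : |w| ∈ Icc (1 / 4) 1 := by
  rcases hw with h | h
  · rw [abs_of_neg (by linarith [h.2])]
    exact ⟨by linarith [h.2], by linarith [h.1]⟩
  · rw [abs_of_pos (by linarith [h.1])]
    exact ⟨by linarith [h.1], h.2.le⟩

theorem exists_sub_mem_observation_or_mem_Ioc {T c : ℝ} (hT : 1 < T)
    (hc : c ∈ Ioo (-1) (T + 1)) : (∃ r ∈ Ioo 0 T, c - r ∈ ω) ∨ c ∈ Ioc (1 / 4) (3 / 4) := by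
  obtain ⟨hc₁, hc₂⟩ := hc
  by_cases hleft : c < T - 3 / 4
  · obtain ⟨r, hr₁, hr₂⟩ := exists_between (show max 0 (c + 3 / 4) < min T (c + 1) from
      max_lt (lt_min (by linarith) (by linarith)) (lt_min (by linarith) (by linarith)))
    rw [max_lt_iff] at hr₁
    rw [lt_min_iff] at hr₂
    exact Or.inl ⟨r, ⟨hr₁.1, hr₂.1⟩, Or.inl ⟨by linarith, by linarith⟩⟩
  by_cases hright : 3 / 4 < c
  · obtain ⟨r, hr₁, hr₂⟩ := exists_between (show max 0 (c - 1) < min T (c - 3 / 4) from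
      max_lt (lt_min (by linarith) (by linarith)) (lt_min (by linarith) (by linarith)))
    rw [max_lt_iff] at hr₁
    rw [lt_min_iff] at hr₂
    exact Or.inl ⟨r, ⟨hr₁.1, hr₂.1⟩, Or.inr ⟨by linarith, by linarith⟩⟩
  exact Or.inr ⟨by linarith, by linarith⟩

structure IsUnobservedWave (T : ℝ) (f : ℝ × ℝ → ℝ) : Prop where
  contDiffOn : ContDiffOn ℝ 2 f (Icc 0 T ×ˢ Icc (-1) 1)
  wave : ∀ z ∈ Ioo 0 T ×ˢ Ioo (-1) 1,
    fderiv ℝ (fderiv ℝ f) z (1, 0) (1, 0) = fderiv ℝ (fderiv ℝ f) z (0, 1) (0, 1)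
  eq_zero_of_mem_observation : ∀ z ∈ Ioo 0 T ×ˢ ω, f z = 0
  eq_zero_initial : ∀ y : ℝ, 1 / 4 ≤ |y| → |y| ≤ 1 → f (0, y) = 0

namespace IsUnobservedWave

variable {T : ℝ} {f : ℝ × ℝ → ℝ} {σ : ℝ}

theorem fderiv_eq_zero_of_mem_observation (hf : IsUnobservedWave T f) {z : ℝ × ℝ}
    (hz : z ∈ Ioo 0 T ×ˢ ω) : fderiv ℝ f z = 0 := by
  have hopen : IsOpen (Ioo 0 T ×ˢ ω) := isOpen_Ioo.prod (isOpen_Ioo.union isOpen_Ioo)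
  rw [(eventuallyEq_of_mem (hopen.mem_nhds hz) hf.eq_zero_of_mem_observation).fderiv_eq]
  exact fderiv_const_apply 0

theorem fderiv_apply_add_smul_eq (hf : IsUnobservedWave T f) (hσ : σ * σ = 1) {z : ℝ × ℝ}
    {s : ℝ} (hz : z ∈ Ioo 0 T ×ˢ Ioo (-1) 1) (hzs : z + s • (1, -σ) ∈ Ioo 0 T ×ˢ Ioo (-1) 1) :
    fderiv ℝ f (z + s • (1, -σ)) (1, σ) = fderiv ℝ f z (1, σ) :=
  fderiv_apply_add_smul_eq_of_wave (isOpen_Ioo.prod isOpen_Ioo)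
    ((convex_Ioo 0 T).prod (convex_Ioo (-1) 1))
    (hf.contDiffOn.mono (prod_mono Ioo_subset_Icc_self Ioo_subset_Icc_self)) hf.wave hσ hz hzs

theorem fderiv_apply_eq_zero_of_notMem_Ioc (hf : IsUnobservedWave T f) (hT : 1 < T)
    (hσ : σ * σ = 1) {t x : ℝ} (hz : (t, x) ∈ Ioo 0 T ×ˢ Ioo (-1) 1)
    (hc : t + σ * x ∉ Ioc (1 / 4) (3 / 4)) : fderiv ℝ f (t, x) (1, σ) = 0 := by
  have hσx := mul_mem_of_forall_neg_mem (fun _ hw => neg_mem_Ioo_iff.2 (by rwa [neg_neg])) hσ hz.2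
  obtain ⟨r, hr, hcr⟩ := (exists_sub_mem_observation_or_mem_Ioc hT
    ⟨by linarith [hz.1.1, hσx.1], by linarith [hz.1.2, hσx.2]⟩).resolve_right hc
  have hpt : (t, x) + (r - t) • ((1 : ℝ), -σ) = (r, σ * (t + σ * x - r)) := by
    ext
    · simp
    · simp only [Prod.snd_add, smul_eq_mul, Prod.smul_mk]
      linear_combination (-x) * hσ
  have hobs : (t, x) + (r - t) • ((1 : ℝ), -σ) ∈ Ioo 0 T ×ˢ ω :=
    hpt ▸ ⟨hr, mul_mem_of_forall_neg_mem (fun _ => neg_mem_observation) hσ hcr⟩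
  rw [← hf.fderiv_apply_add_smul_eq hσ hz (prod_mono subset_rfl observation_subset_Ioo hobs),
    hf.fderiv_eq_zero_of_mem_observation hobs, zero_apply]

theorem fderivWithin_apply_zero_one_eq_zero_initial (hf : IsUnobservedWave T f) (hT : 0 < T)
    {y : ℝ} (hy : |y| ∈ Ioo (1 / 4) 1) :
    fderivWithin ℝ f (Icc 0 T ×ˢ Icc (-1) 1) (0, y) (0, 1) = 0 := by
  have hy₁ := abs_lt.1 hy.2
  have hd : HasFDerivWithinAt f (fderivWithin ℝ f (Icc 0 T ×ˢ Icc (-1) 1) (0, y))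
      (Icc 0 T ×ˢ Icc (-1) 1) (0, y) :=
    (hf.contDiffOn.differentiableOn two_ne_zero _
      ⟨⟨le_rfl, hT.le⟩, hy₁.1.le, hy₁.2.le⟩).hasFDerivWithinAt
  rcases le_or_gt 0 y with hpos | hneg
  · rw [abs_of_nonneg hpos] at hy
    refine (hd.mono (prod_mono subset_rfl (Icc_subset_Icc (by norm_num) le_rfl :
      Icc (1 / 4 : ℝ) 1 ⊆ Icc (-1) 1))).apply_zero_one_eq_zero_of_slice_eq_zero
      ⟨le_rfl, hT.le⟩ (by norm_num) ⟨hy.1.le, hy.2.le⟩ fun y' hy' => ?_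
    exact hf.eq_zero_initial y' (hy'.1.trans (le_abs_self y'))
      (abs_le.2 ⟨by linarith [hy'.1], hy'.2⟩)
  · rw [abs_of_neg hneg] at hy
    refine (hd.mono (prod_mono subset_rfl (Icc_subset_Icc le_rfl (by norm_num) :
      Icc (-1 : ℝ) (-1 / 4) ⊆ Icc (-1) 1))).apply_zero_one_eq_zero_of_slice_eq_zero
      ⟨le_rfl, hT.le⟩ (by norm_num) ⟨by linarith [hy.2], by linarith [hy.1]⟩ fun y' hy' => ?_
    exact hf.eq_zero_initial y' ((by linarith [hy'.2] : (1 : ℝ) / 4 ≤ -y').trans (neg_le_abs y'))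
      (abs_le.2 ⟨hy'.1, by linarith [hy'.2]⟩)

theorem fderivWithin_apply_zero_one_eq_of_mem_Ioc (hf : IsUnobservedWave T f) (hT : 1 < T)
    (hσ : σ * σ = 1) {t x s : ℝ} (hz : (t, x) ∈ Ioo 0 T ×ˢ Ioo (-1) 1)
    (hc : t + σ * x ∈ Ioc (1 / 4) (3 / 4)) (hs : s ∈ Ioo 0 (1 / 4)) :
    fderivWithin ℝ f (Icc 0 T ×ˢ Icc (-1) 1) (s, σ * (t + σ * x - s)) (0, 1) =
      σ / 2 * fderiv ℝ f (t, x) (1, σ) := by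
  set c := t + σ * x
  have hmem : (s, σ * (c - s)) ∈ Ioo 0 T ×ˢ Ioo (-1) 1 :=
    ⟨⟨hs.1, by linarith [hs.2]⟩, mul_mem_of_forall_neg_mem
      (fun _ hw => neg_mem_Ioo_iff.2 (by rwa [neg_neg])) hσ
      ⟨by linarith [hs.2, hc.1], by linarith [hs.1, hc.2]⟩⟩
  have hpt : (t, x) + (s - t) • ((1 : ℝ), -σ) = (s, σ * (c - s)) := by
    ext
    · simp
    · simp only [Prod.snd_add, smul_eq_mul, Prod.smul_mk]
      linear_combination (-x) * hσ
  have hP : fderiv ℝ f (s, σ * (c - s)) (1, σ) = fderiv ℝ f (t, x) (1, σ) :=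
    hpt ▸ hf.fderiv_apply_add_smul_eq hσ hz (hpt ▸ hmem)
  have hQ : fderiv ℝ f (s, σ * (c - s)) (1, -σ) = 0 := by
    refine hf.fderiv_apply_eq_zero_of_notMem_Ioc hT (by linear_combination hσ) hmem fun h => ?_
    have : s + -σ * (σ * (c - s)) = 2 * s - c := by linear_combination (s - c) * hσ
    linarith [h.1, hs.2, hc.1]
  have hsplit : ((0 : ℝ), (1 : ℝ)) = (σ / 2) • (((1 : ℝ), σ) - ((1 : ℝ), -σ)) := by
    ext
    · simp
    · simp only [Prod.smul_mk, Prod.mk_sub_mk, smul_eq_mul]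
      linear_combination -hσ
  rw [fderivWithin_of_mem_nhds (Icc_prod_Icc_mem_nhds hmem), hsplit, map_smul, map_sub, hP, hQ,
    sub_zero, smul_eq_mul]

theorem fderiv_apply_eq_zero (hf : IsUnobservedWave T f) (hT : 1 < T) (hσ : σ * σ = 1)
    {t x : ℝ} (hz : (t, x) ∈ Ioo 0 T ×ˢ Ioo (-1) 1) : fderiv ℝ f (t, x) (1, σ) = 0 := by
  by_cases hc : t + σ * x ∈ Ioc (1 / 4) (3 / 4)
  swap
  · exact hf.fderiv_apply_eq_zero_of_notMem_Ioc hT hσ hz hc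
  set R := Icc 0 T ×ˢ Icc (-1 : ℝ) 1
  have hT₀ : 0 < T := by linarith
  have hσ₁ : |σ| = 1 := by rcases mul_self_eq_one_iff.mp hσ with rfl | rfl <;> norm_num
  have hD : ContinuousOn (fderivWithin ℝ f R) R :=
    hf.contDiffOn.continuousOn_fderivWithin
      ((uniqueDiffOn_Icc hT₀).prod (uniqueDiffOn_Icc (by norm_num))) (by norm_num)
  have hγ : MapsTo (fun s => (s, σ * (t + σ * x - s))) (Icc 0 (1 / 4)) R := fun s hs =>
    ⟨⟨hs.1, by linarith [hs.2]⟩, abs_le.1 (by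
      rw [abs_mul, hσ₁, one_mul, abs_le]; constructor <;> linarith [hs.1, hs.2, hc.1, hc.2])⟩
  have hcont : ContinuousOn (fun s => fderivWithin ℝ f R (s, σ * (t + σ * x - s)) (0, 1))
      (Icc 0 (1 / 4)) :=
    (hD.comp (by fun_prop) hγ).clm_apply continuousOn_const
  have hlim := (EqOn.of_subset_closure (t := Icc 0 (1 / 4))
    (fun s hs => hf.fderivWithin_apply_zero_one_eq_of_mem_Ioc hT hσ hz hc hs) hcont
    continuousOn_const Ioo_subset_Icc_self (by rw [closure_Ioo (by norm_num)]))
    (left_mem_Icc.2 (by norm_num))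
  have hinit := hf.fderivWithin_apply_zero_one_eq_zero_initial hT₀ (y := σ * (t + σ * x - 0)) (by
    rw [abs_mul, hσ₁, one_mul, sub_zero, abs_of_pos (by linarith [hc.1])]
    exact ⟨hc.1, by linarith [hc.2]⟩)
  have hP : σ / 2 * fderiv ℝ f (t, x) (1, σ) = 0 := hlim.symm.trans hinit
  exact (mul_eq_zero.1 hP).resolve_left (div_ne_zero (left_ne_zero_of_mul_eq_one hσ) two_ne_zero)

theorem fderiv_eq_zero (hf : IsUnobservedWave T f) (hT : 1 < T) {z : ℝ × ℝ}
    (hz : z ∈ Ioo 0 T ×ˢ Ioo (-1) 1) : fderiv ℝ f z = 0 := by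
  refine ContinuousLinearMap.ext fun v => ?_
  have hv : v = ((v.1 + v.2) / 2) • ((1 : ℝ), (1 : ℝ)) + ((v.1 - v.2) / 2) • ((1 : ℝ), -1) := by
    ext <;> simp <;> ring
  rw [hv, map_add, map_smul, map_smul, hf.fderiv_apply_eq_zero hT (by norm_num) hz,
    hf.fderiv_apply_eq_zero hT (by norm_num) hz]
  simp

theorem eq_zero (hf : IsUnobservedWave T f) (hT : 1 < T) :
    ∀ z ∈ Icc 0 T ×ˢ Icc (-1) 1, f z = 0 := by
  have hO : IsOpen (Ioo 0 T ×ˢ Ioo (-1 : ℝ) 1) := isOpen_Ioo.prod isOpen_Ioo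
  have hOR : Ioo 0 T ×ˢ Ioo (-1 : ℝ) 1 ⊆ Icc 0 T ×ˢ Icc (-1) 1 :=
    prod_mono Ioo_subset_Icc_self Ioo_subset_Icc_self
  have hobs : ((1 : ℝ) / 2, (7 : ℝ) / 8) ∈ Ioo 0 T ×ˢ ω :=
    ⟨⟨by norm_num, by linarith⟩, Or.inr ⟨by norm_num, by norm_num⟩⟩
  have hzero : EqOn f 0 (Ioo 0 T ×ˢ Ioo (-1) 1) := fun z hz =>
    (hO.is_const_of_fderiv_eq_zero ((convex_Ioo 0 T).prod (convex_Ioo (-1) 1)).isPreconnected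
      ((hf.contDiffOn.mono hOR).differentiableOn two_ne_zero) (fun z hz => hf.fderiv_eq_zero hT hz)
      hz (prod_mono subset_rfl observation_subset_Ioo hobs)).trans
      (hf.eq_zero_of_mem_observation _ hobs)
  exact hzero.of_subset_closure hf.contDiffOn.continuousOn continuousOn_const hOR
    (by rw [closure_prod_eq, closure_Ioo (by linarith), closure_Ioo (by norm_num)])

end IsUnobservedWave

theorem unique_continuation_1d_localized_general (T : ℝ) (hT : 1 < T) (u : ℝ → ℝ → ℝ)
    -- u is of class C² on [0,T] × [−1,1]
    (hreg : ContDiffOn ℝ 2 (Function.uncurry u) (Set.Icc 0 T ×ˢ Set.Icc (-1 : ℝ) 1))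
    -- u solves the wave equation on [0,T] × [−1,1]
    (hwave : ∀ t ∈ Set.Icc (0 : ℝ) T, ∀ x ∈ Set.Icc (-1 : ℝ) 1,
      pdt (pdt u) t x = pdx (pdx u) t x)
    -- initial data supported in [−1/4, 1/4]
    (hsupp : ∀ x : ℝ, 1 / 4 ≤ |x| → |x| ≤ 1 → u 0 x = 0 ∧ pdt u 0 x = 0)
    -- ∂ₜ u vanishes on the observation set (0,T) × ω
    (hobs : ∀ t ∈ Set.Ioo (0 : ℝ) T,
      ∀ x ∈ (Set.Ioo (-1 : ℝ) (-3 / 4) ∪ Set.Ioo (3 / 4 : ℝ) 1), pdt u t x = 0) :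
    ∀ t ∈ Set.Icc (0 : ℝ) T, ∀ x ∈ Set.Icc (-1 : ℝ) 1, u t x = 0 := by
  have hu : IsUnobservedWave T (uncurry u) :=
    { contDiffOn := hreg
      wave := fun ⟨t, x⟩ hz => by
        have h := hreg.contDiffAt (Icc_prod_Icc_mem_nhds hz)
        rw [← pdt_pdt_eq_fderiv_fderiv h, ← pdx_pdx_eq_fderiv_fderiv h]
        exact hwave t (Ioo_subset_Icc_self hz.1) x (Ioo_subset_Icc_self hz.2)
      eq_zero_of_mem_observation := eq_zero_of_pdt_eq_zero observation_subset_Ioo hreg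
        (fun x hx => (hsupp x (abs_mem_Icc_of_mem_observation hx).1
          (abs_mem_Icc_of_mem_observation hx).2).1) hobs
      eq_zero_initial := fun y h₁ h₂ => (hsupp y h₁ h₂).1 }
  exact fun t ht x hx => hu.eq_zero hT (t, x) ⟨ht, hx⟩

theorem unique_continuation_1d_localized (T : ℝ) (hT : 1 < T) (u : ℝ → ℝ → ℝ)
    -- u is of class C² on [0,T] × [−1,1]
    (hreg : ContDiffOn ℝ 2 (Function.uncurry u) (Set.Icc 0 T ×ˢ Set.Icc (-1 : ℝ) 1))
    -- u solves the wave equation on [0,T] × [−1,1]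
    (hwave : ∀ t ∈ Set.Icc (0 : ℝ) T, ∀ x ∈ Set.Icc (-1 : ℝ) 1,
      pdt (pdt u) t x = pdx (pdx u) t x)
    -- Dirichlet boundary conditions
    (hbdry : ∀ t ∈ Set.Icc (0 : ℝ) T, u t (-1) = 0 ∧ u t 1 = 0)
    -- initial data supported in [−1/4, 1/4]
    (hsupp : ∀ x : ℝ, 1 / 4 ≤ |x| → |x| ≤ 1 → u 0 x = 0 ∧ pdt u 0 x = 0)
    -- ∂ₜ u vanishes on the observation set (0,T) × ω
    (hobs : ∀ t ∈ Set.Ioo (0 : ℝ) T,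
      ∀ x ∈ (Set.Ioo (-1 : ℝ) (-3 / 4) ∪ Set.Ioo (3 / 4 : ℝ) 1), pdt u t x = 0) :
    ∀ t ∈ Set.Icc (0 : ℝ) T, ∀ x ∈ Set.Icc (-1 : ℝ) 1, u t x = 0 :=
  unique_continuation_1d_localized_general T hT u hreg hwave hsupp hobs
end

section
/- Let X be a real Hilbert space, let Y and Z be real normed vector spaces, let ι : X → Y be a compact continuous linear map, let T : X → Z be a continuous linear map, and let E ⊆ X be a closed linear subspace. Assume: (i) there exists C₀ > 0 such that ‖x‖_X ≤ C₀ ( ‖T x‖_Z + ‖ι x‖_Y ) for all x ∈ E; and (ii) every x ∈ E with T x = 0 satisfies x = 0. Then there exists C > 0 such that ‖x‖_X ≤ C ‖T x‖_Z for all x ∈ E. -/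
theorem compactness_uniqueness_lemma
    {X Y Z : Type*} [NormedAddCommGroup X] [InnerProductSpace ℝ X] [CompleteSpace X]
    [NormedAddCommGroup Y] [NormedSpace ℝ Y] [NormedAddCommGroup Z] [NormedSpace ℝ Z]
    (ι : X →L[ℝ] Y) (hι : IsCompactOperator ⇑ι)
    (T : X →L[ℝ] Z) (E : Submodule ℝ X) (hE : IsClosed (E : Set X))
    (C₀ : ℝ) (hC₀ : 0 < C₀)
    (h1 : ∀ x ∈ E, ‖x‖ ≤ C₀ * (‖T x‖ + ‖ι x‖))
    (h2 : ∀ x ∈ E, T x = 0 → x = 0) :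
    ∃ C : ℝ, 0 < C ∧ ∀ x ∈ E, ‖x‖ ≤ C * ‖T x‖ := by
  by_contra h
  push_neg at h
  choose! x hxE hx using fun n : ℕ => h (n + 1) (by positivity)
  -- x n ∈ E, (n+1) * ‖T (x n)‖ < ‖x n‖
  have hxne : ∀ n, x n ≠ 0 := by
    intro n hn
    have := hx n
    rw [hn] at this
    simp at this
  set y : ℕ → X := fun n => ‖x n‖⁻¹ • x n with hy
  have hynorm : ∀ n, ‖y n‖ = 1 := by
    intro n
    simp [hy, norm_smul, abs_of_nonneg (inv_nonneg.2 (norm_nonneg _))]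
    rw [inv_mul_cancel₀ (norm_ne_zero_iff.2 (hxne n))]
  have hyE : ∀ n, y n ∈ E := fun n => E.smul_mem _ (hxE n)
  have hTy : ∀ n, ‖T (y n)‖ < ((n:ℝ) + 1)⁻¹ := by
    intro n
    have hxpos : (0:ℝ) < ‖x n‖ := norm_pos_iff.2 (hxne n)
    have hn1 : (0:ℝ) < (n:ℝ) + 1 := by positivity
    have hT' : ‖T (x n)‖ < ‖x n‖ / ((n:ℝ) + 1) := by
      rw [lt_div_iff₀ hn1]; nlinarith [hx n]
    have : T (y n) = ‖x n‖⁻¹ • T (x n) := by simp [hy]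
    rw [this, norm_smul, norm_inv, norm_norm]
    calc ‖x n‖⁻¹ * ‖T (x n)‖ < ‖x n‖⁻¹ * (‖x n‖ / ((n:ℝ) + 1)) :=
          mul_lt_mul_of_pos_left hT' (by positivity)
    _ = ((n:ℝ) + 1)⁻¹ := by field_simp
  -- compactness : extract subsequence with ι (y ∘ φ) convergent
  obtain ⟨K, hK, hKsub⟩ := hι.image_subset_compact_of_isVonNBounded
    (NormedSpace.isVonNBounded_closedBall ℝ X 1)
  have hmem : ∀ n, ι (y n) ∈ K := by
    intro n
    apply hKsub
    exact ⟨y n, by simp [Metric.mem_closedBall, dist_zero_right, (hynorm n).le], rfl⟩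
  obtain ⟨z, -, φ, hφ, hconv⟩ := hK.tendsto_subseq hmem
  -- y ∘ φ is Cauchy
  have hcauchyι : CauchySeq (fun n => ι (y (φ n))) := hconv.cauchySeq
  have hcauchy : CauchySeq (fun n => y (φ n)) := by
    rw [Metric.cauchySeq_iff] at hcauchyι ⊢
    intro ε hε
    obtain ⟨N₁, hN₁⟩ := hcauchyι (ε / (2 * C₀)) (by positivity)
    obtain ⟨N₂, hN₂⟩ := exists_nat_gt (4 * C₀ / ε)
    refine ⟨max N₁ N₂, fun m hm n hn => ?_⟩
    have hdiff := h1 (y (φ m) - y (φ n)) (E.sub_mem (hyE _) (hyE _))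
    have hιd : ‖ι (y (φ m)) - ι (y (φ n))‖ < ε / (2 * C₀) := by
      have := hN₁ m (le_of_max_le_left hm) n (le_of_max_le_left hn)
      rwa [dist_eq_norm] at this
    have hTle : ∀ k, N₂ ≤ k → ‖T (y (φ k))‖ < ε / (4 * C₀) := by
      intro k hk
      have h1' : ‖T (y (φ k))‖ < ((φ k : ℝ) + 1)⁻¹ := hTy (φ k)
      have hφk : (k : ℝ) ≤ φ k := by exact_mod_cast hφ.id_le k
      have hN2k : (4 * C₀ / ε) < (φ k : ℝ) + 1 := by
        have : (N₂ : ℝ) ≤ k := by exact_mod_cast hk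
        linarith
      have : ((φ k : ℝ) + 1)⁻¹ < ε / (4 * C₀) := by
        rw [inv_lt_iff_one_lt_mul₀ (by positivity)]
        rw [div_lt_iff₀ (by positivity)] at hN2k
        calc (1:ℝ) = (4 * C₀ / ε) * (ε / (4 * C₀)) := by field_simp
        _ < ((φ k : ℝ) + 1) * (ε / (4 * C₀)) := by
            apply mul_lt_mul_of_pos_right _ (by positivity)
            rw [div_lt_iff₀ (by positivity : (0:ℝ) < ε)]
            linarith [hN2k]
        _ = _ := by ring
      linarith
    have hTm := hTle m (le_of_max_le_right hm)
    have hTn := hTle n (le_of_max_le_right hn)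
    have hTd : ‖T (y (φ m) - y (φ n))‖ < ε / (2 * C₀) := by
      rw [map_sub]
      calc ‖T (y (φ m)) - T (y (φ n))‖ ≤ ‖T (y (φ m))‖ + ‖T (y (φ n))‖ := norm_sub_le _ _
      _ < ε / (4 * C₀) + ε / (4 * C₀) := by linarith
      _ = ε / (2 * C₀) := by ring
    rw [dist_eq_norm]
    calc ‖y (φ m) - y (φ n)‖ ≤ C₀ * (‖T (y (φ m) - y (φ n))‖ + ‖ι (y (φ m) - y (φ n))‖) := hdiff
    _ < C₀ * (ε / (2 * C₀) + ε / (2 * C₀)) := by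
        apply mul_lt_mul_of_pos_left _ hC₀
        have : ι (y (φ m) - y (φ n)) = ι (y (φ m)) - ι (y (φ n)) := map_sub ι _ _
        rw [this]
        linarith
    _ = ε := by field_simp; ring
  obtain ⟨l, hl⟩ := cauchySeq_tendsto_of_complete hcauchy
  have hlE : l ∈ E := hE.mem_of_tendsto hl (Filter.Eventually.of_forall fun n => hyE _)
  have hlnorm : ‖l‖ = 1 := by
    have : Filter.Tendsto (fun n => ‖y (φ n)‖) Filter.atTop (nhds ‖l‖) :=
      (continuous_norm.continuousAt.tendsto.comp hl)
    simp only [hynorm] at this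
    exact tendsto_nhds_unique this tendsto_const_nhds
  have hTl : T l = 0 := by
    have h1' : Filter.Tendsto (fun n => T (y (φ n))) Filter.atTop (nhds (T l)) :=
      (T.continuous.continuousAt.tendsto.comp hl)
    have h2' : Filter.Tendsto (fun n => T (y (φ n))) Filter.atTop (nhds 0) := by
      rw [tendsto_zero_iff_norm_tendsto_zero]
      apply squeeze_zero (fun n => norm_nonneg _) (fun n => (hTy (φ n)).le.trans ?_)
      · exact tendsto_one_div_add_atTop_nhds_zero_nat.congr (by intro n; rw [one_div])
      · have hc : (n : ℝ) ≤ (φ n : ℝ) := by exact_mod_cast hφ.id_le n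
        exact inv_anti₀ (by positivity) (by linarith)
    exact tendsto_nhds_unique h1' h2'
  have := h2 l hlE hTl
  rw [this] at hlnorm
  simp at hlnorm
end

section
/- Let Ω = (−10,10) and ω = (−2,−1) ∪ (1,2). For all real numbers a, b with −2 < a ≤ b < 2 there exists a constant C > 0 such that every classical solution u of the one-dimensional wave equation on [0,3]×[−10,10] with Dirichlet boundary conditions satisfies ∫_a^b ( (∂ₓu(0,x))² + (∂ₜu(0,x))² ) dx ≤ C ∫_0^3 ∫_ω ( (∂ₜu(t,x))² + (∂ₓu(t,x))² ) dx dt, with no restriction on the support of the initial data. -/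
/-!
Along a characteristic `x + ε t = const` (`ε = ±1`) the Riemann invariant `w_ε = ∂ₜu - ε ∂ₓu` is
constant, because its derivative in the direction `(1, ε)` is `∂ₜ²u - ∂ₓ²u = 0`. For
`-2 < a < x ≤ b < 2` the characteristic `x + t` stays in `(1, 2)` during a time interval of length
`L = min 1 (min (2 - b) (2 + a))` inside `(0, 3)`, and `x - t` stays in `(-2, -1)` as long, both far
from the boundary `x = ±10`. So `L w_ε(0, x)²` is at most the time integral of `w_ε²` along the
characteristic inside `(0, 3) × ω`; integrating in `x` (Fubini, then the translation `x ↦ x + ε t`)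
gives `L ∫ₐᵇ w_ε(0, ·)² ≤ ∬_{(0,3) × ω} w_ε²`. Since `w₁² + w₋₁² = 2 (∂ₜu² + ∂ₓu²)` and
`w_ε² ≤ 2 (∂ₜu² + ∂ₓu²)`, adding the two families gives the estimate with `C = 1 / L`.
-/

open MeasureTheory

open Set Function Filter Topology

theorem mul_setIntegral_le_of_const_along_lines {φ : ℝ × ℝ → ℝ} {s I V : Set ℝ} {ε L : ℝ}
    (hs : MeasurableSet s) (hV : MeasurableSet V) (hφ : 0 ≤ φ) (hL : 0 ≤ L)
    (hφint : IntegrableOn φ (I ×ˢ V))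
    (hφshear : IntegrableOn (fun q : ℝ × ℝ => φ (q.2, q.1 + ε * q.2)) (s ×ˢ I))
    (hconst : ∀ x ∈ s, ∀ t ∈ I, φ (t, x + ε * t) = φ (0, x))
    (hwindow : ∀ x ∈ s, ∃ t₀, Ioo t₀ (t₀ + L) ⊆ I ∩ (fun t => x + ε * t) ⁻¹' V) :
    L * ∫ x in s, φ (0, x) ≤ ∫ q in I ×ˢ V, φ q := by
  set ψ : ℝ → ℝ → ℝ := fun x t => V.indicator (fun y => φ (t, y)) (x + ε * t)
  have hψ_nonneg : ∀ x t, 0 ≤ ψ x t := fun x t => indicator_nonneg (fun y _ => hφ _) _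
  have hψ : Integrable (uncurry ψ) ((volume.restrict s).prod (volume.restrict I)) := by
    rw [Measure.prod_restrict, ← Measure.volume_eq_prod]
    exact hφshear.indicator (t := {q : ℝ × ℝ | q.1 + ε * q.2 ∈ V}) (hV.preimage (by fun_prop))
  have hφprod : Integrable φ ((volume.restrict I).prod (volume.restrict V)) := by
    rwa [Measure.prod_restrict, ← Measure.volume_eq_prod]
  have h_initial : ∀ᵐ x ∂volume.restrict s, L * φ (0, x) ≤ ∫ t in I, ψ x t := by
    filter_upwards [hψ.prod_right_ae, ae_restrict_mem hs] with x hx_int hx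
    obtain ⟨t₀, hw⟩ := hwindow x hx
    calc L * φ (0, x) = ∫ _ in Ioo t₀ (t₀ + L), φ (0, x) := by
          rw [setIntegral_const, Real.volume_real_Ioo_of_le (by linarith), smul_eq_mul,
            add_sub_cancel_left]
      _ = ∫ t in Ioo t₀ (t₀ + L), ψ x t := by
          refine setIntegral_congr_fun measurableSet_Ioo fun t ht => ?_
          show φ (0, x) = V.indicator (fun y => φ (t, y)) (x + ε * t)
          rw [indicator_of_mem (show x + ε * t ∈ V from (hw ht).2), hconst x hx t (hw ht).1]
      _ ≤ ∫ t in I, ψ x t :=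
          setIntegral_mono_set hx_int (.of_forall (hψ_nonneg x))
            (hw.trans inter_subset_left).eventuallyLE
  have h_slice : ∀ᵐ t ∂volume.restrict I, ∫ x in s, ψ x t ≤ ∫ y in V, φ (t, y) := by
    filter_upwards [hφprod.prod_right_ae] with t ht
    have hshift : Integrable (fun x => ψ x t) :=
      ((integrable_indicator_iff hV).2 ht).comp_add_right (ε * t)
    calc ∫ x in s, ψ x t ≤ ∫ x, ψ x t :=
          setIntegral_le_integral hshift (.of_forall fun x => hψ_nonneg x t)
      _ = ∫ y in V, φ (t, y) := by
          rw [integral_add_right_eq_self (V.indicator fun y => φ (t, y)), integral_indicator hV]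
  calc L * ∫ x in s, φ (0, x) = ∫ x in s, L * φ (0, x) := (integral_const_mul _ _).symm
    _ ≤ ∫ x in s, ∫ t in I, ψ x t :=
        integral_mono_of_nonneg (.of_forall fun x => mul_nonneg hL (hφ _))
          hψ.integral_prod_left h_initial
    _ = ∫ t in I, ∫ x in s, ψ x t := integral_integral_swap hψ
    _ ≤ ∫ t in I, ∫ y in V, φ (t, y) :=
        integral_mono_of_nonneg (.of_forall fun t => integral_nonneg fun x => hψ_nonneg x t)
          hφprod.integral_prod_left h_slice
    _ = ∫ q in I ×ˢ V, φ q := by rw [Measure.volume_eq_prod, setIntegral_prod _ hφint]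

section Slices

variable {F : Type*} [NormedAddCommGroup F] [NormedSpace ℝ F] {f : ℝ × ℝ → F}
  {f' : ℝ × ℝ →L[ℝ] F} {s t : Set ℝ} {a b c ε : ℝ}

theorem HasFDerivWithinAt.hasDerivWithinAt_left_slice
    (h : HasFDerivWithinAt f f' (s ×ˢ t) (a, b)) (hb : b ∈ t) :
    HasDerivWithinAt (fun r => f (r, b)) (f' (1, 0)) s a := by
  simpa [Function.comp_def] using h.comp_hasDerivWithinAt a
    ((hasDerivAt_id a).prodMk (hasDerivAt_const a b)).hasDerivWithinAt
    fun _ hr => mk_mem_prod hr hb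

theorem HasFDerivWithinAt.hasDerivWithinAt_right_slice
    (h : HasFDerivWithinAt f f' (s ×ˢ t) (a, b)) (ha : a ∈ s) :
    HasDerivWithinAt (fun r => f (a, r)) (f' (0, 1)) t b := by
  simpa [Function.comp_def] using h.comp_hasDerivWithinAt b
    ((hasDerivAt_const b a).prodMk (hasDerivAt_id b)).hasDerivWithinAt
    fun _ hr => mk_mem_prod ha hr

theorem HasFDerivAt.hasDerivAt_left_slice (h : HasFDerivAt f f' (a, b)) :
    HasDerivAt (fun r => f (r, b)) (f' (1, 0)) a := by
  simpa [Function.comp_def] using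
    h.comp_hasDerivAt a ((hasDerivAt_id a).prodMk (hasDerivAt_const a b))

theorem HasFDerivAt.hasDerivAt_right_slice (h : HasFDerivAt f f' (a, b)) :
    HasDerivAt (fun r => f (a, r)) (f' (0, 1)) b := by
  simpa [Function.comp_def] using
    h.comp_hasDerivAt b ((hasDerivAt_const b a).prodMk (hasDerivAt_id b))

theorem HasFDerivAt.hasDerivAt_line (h : HasFDerivAt f f' (a, c + ε * a)) :
    HasDerivAt (fun r => f (r, c + ε * r)) (f' (1, ε)) a := by
  simpa [Function.comp_def] using h.comp_hasDerivAt a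
    ((hasDerivAt_id a).prodMk (((hasDerivAt_id a).const_mul ε).const_add c))

end Slices

theorem hasDerivAt_fderiv_along_characteristic {U : ℝ × ℝ → ℝ} {a c ε : ℝ}
    (hU : ContDiffAt ℝ 2 U (a, c + ε * a))
    (hwave : fderiv ℝ (fderiv ℝ U) (a, c + ε * a) (1, 0) (1, 0) =
      fderiv ℝ (fderiv ℝ U) (a, c + ε * a) (0, 1) (0, 1))
    (hε : ε ^ 2 = 1) :
    HasDerivAt (fun r => fderiv ℝ U (r, c + ε * r) (1, -ε)) 0 a := by
  have h2 := ((hU.fderiv_right (by norm_num)).differentiableAt one_ne_zero).hasFDerivAt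
  have hsymm := hU.isSymmSndFDerivAt (by simp) (0, 1) (1, 0)
  refine (h2.hasDerivAt_line.clm_apply (hasDerivAt_const a ((1 : ℝ), -ε))).congr_deriv ?_
  set B := fderiv ℝ (fderiv ℝ U) (a, c + ε * a)
  rw [show ((1 : ℝ), ε) = (1, 0) + ε • (0, 1) by simp,
    show ((1 : ℝ), -ε) = (1, 0) - ε • (0, 1) by simp]
  simp only [map_add, map_sub, map_smul, add_apply, smul_apply, smul_eq_mul, map_zero, add_zero]
  rw [hsymm, hwave]
  linear_combination (-B (0, 1) (0, 1)) * hε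

section WaveEquation

variable {u : ℝ → ℝ → ℝ}

section Partials

variable {s t : Set ℝ} {a b : ℝ}

theorem pdt_eq_fderivWithin (hu : DifferentiableWithinAt ℝ (uncurry u) (s ×ˢ t) (a, b))
    (hs : s ∈ 𝓝 a) (hb : b ∈ t) :
    pdt u a b = fderivWithin ℝ (uncurry u) (s ×ˢ t) (a, b) (1, 0) :=
  ((hu.hasFDerivWithinAt.hasDerivWithinAt_left_slice hb).hasDerivAt hs).deriv

theorem pdx_eq_fderivWithin (hu : DifferentiableWithinAt ℝ (uncurry u) (s ×ˢ t) (a, b))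
    (ha : a ∈ s) (ht : t ∈ 𝓝 b) :
    pdx u a b = fderivWithin ℝ (uncurry u) (s ×ˢ t) (a, b) (0, 1) :=
  ((hu.hasFDerivWithinAt.hasDerivWithinAt_right_slice ha).hasDerivAt ht).deriv

/-- At an edge `a` of `s` (such as `t = 0`), `pdt u a b` is a two-sided derivative that also sees
`u` outside `s ×ˢ t`: it is either the one-sided derivative or the junk value `0`. -/
theorem sq_pdt_le_sq_fderivWithin (hu : DifferentiableWithinAt ℝ (uncurry u) (s ×ˢ t) (a, b))
    (hs : UniqueDiffWithinAt ℝ s a) (hb : b ∈ t) :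
    pdt u a b ^ 2 ≤ fderivWithin ℝ (uncurry u) (s ×ˢ t) (a, b) (1, 0) ^ 2 := by
  have hslice : HasDerivWithinAt (fun r => u r b) _ s a :=
    hu.hasFDerivWithinAt.hasDerivWithinAt_left_slice hb
  by_cases hd : DifferentiableAt ℝ (fun r => u r b) a
  · rw [pdt, ← hd.derivWithin hs, hslice.derivWithin hs]
  · rw [pdt, deriv_zero_of_not_differentiableAt hd, sq, zero_mul]
    positivity

theorem pdt_pdt_eq (hu : ContDiffAt ℝ 2 (uncurry u) (a, b)) :
    pdt (pdt u) a b = fderiv ℝ (fderiv ℝ (uncurry u)) (a, b) (1, 0) (1, 0) := by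
  have hdiff : ∀ᶠ r in 𝓝 a, DifferentiableAt ℝ (uncurry u) (r, b) :=
    (continuous_id.prodMk continuous_const).tendsto a |>.eventually <|
      (hu.eventually (by simp)).mono fun q hq => hq.differentiableAt (by simp)
  have hslice : (fun r => pdt u r b) =ᶠ[𝓝 a] fun r => fderiv ℝ (uncurry u) (r, b) (1, 0) :=
    hdiff.mono fun r hr => hr.hasFDerivAt.hasDerivAt_left_slice.deriv
  have h2 := ((hu.fderiv_right (by norm_num)).differentiableAt one_ne_zero).hasFDerivAt
  show deriv (fun r => pdt u r b) a = _
  rw [hslice.deriv_eq]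
  simpa using (h2.hasDerivAt_left_slice.clm_apply (hasDerivAt_const a ((1 : ℝ), (0 : ℝ)))).deriv

theorem pdx_pdx_eq (hu : ContDiffAt ℝ 2 (uncurry u) (a, b)) :
    pdx (pdx u) a b = fderiv ℝ (fderiv ℝ (uncurry u)) (a, b) (0, 1) (0, 1) := by
  have hdiff : ∀ᶠ r in 𝓝 b, DifferentiableAt ℝ (uncurry u) (a, r) :=
    (continuous_const.prodMk continuous_id).tendsto b |>.eventually <|
      (hu.eventually (by simp)).mono fun q hq => hq.differentiableAt (by simp)
  have hslice : (fun r => pdx u a r) =ᶠ[𝓝 b] fun r => fderiv ℝ (uncurry u) (a, r) (0, 1) :=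
    hdiff.mono fun r hr => hr.hasFDerivAt.hasDerivAt_right_slice.deriv
  have h2 := ((hu.fderiv_right (by norm_num)).differentiableAt one_ne_zero).hasFDerivAt
  show deriv (fun r => pdx u a r) b = _
  rw [hslice.deriv_eq]
  simpa using (h2.hasDerivAt_right_slice.clm_apply (hasDerivAt_const b ((0 : ℝ), (1 : ℝ)))).deriv

end Partials

section RiemannInvariants

/-- `w_ε = ∂ₜu - ε ∂ₓu`, built from the derivative within `D` so that it is continuous up to the
boundary of `D`. -/
noncomputable def riemannInvariant (D : Set (ℝ × ℝ)) (u : ℝ → ℝ → ℝ) (ε : ℝ) (p : ℝ × ℝ) : ℝ :=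
  fderivWithin ℝ (uncurry u) D p (1, -ε)

noncomputable def energyDensity (D : Set (ℝ × ℝ)) (u : ℝ → ℝ → ℝ) (p : ℝ × ℝ) : ℝ :=
  fderivWithin ℝ (uncurry u) D p (1, 0) ^ 2 + fderivWithin ℝ (uncurry u) D p (0, 1) ^ 2

variable {D : Set (ℝ × ℝ)}

theorem riemannInvariant_eq (ε : ℝ) (p : ℝ × ℝ) :
    riemannInvariant D u ε p =
      fderivWithin ℝ (uncurry u) D p (1, 0) - ε * fderivWithin ℝ (uncurry u) D p (0, 1) := by
  rw [riemannInvariant, show ((1 : ℝ), -ε) = (1, 0) - ε • (0, 1) by simp, map_sub, map_smul,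
    smul_eq_mul]

theorem sq_riemannInvariant_le {ε : ℝ} (hε : ε ^ 2 = 1) (p : ℝ × ℝ) :
    riemannInvariant D u ε p ^ 2 ≤ 2 * energyDensity D u p := by
  rw [riemannInvariant_eq, energyDensity]
  nlinarith [sq_nonneg (fderivWithin ℝ (uncurry u) D p (1, 0) +
    ε * fderivWithin ℝ (uncurry u) D p (0, 1))]

theorem sq_riemannInvariant_add_sq (p : ℝ × ℝ) :
    riemannInvariant D u 1 p ^ 2 + riemannInvariant D u (-1) p ^ 2 = 2 * energyDensity D u p := by
  rw [riemannInvariant_eq, riemannInvariant_eq, energyDensity]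
  ring

theorem continuousOn_riemannInvariant (hu : ContDiffOn ℝ 1 (uncurry u) D)
    (hD : UniqueDiffOn ℝ D) (ε : ℝ) : ContinuousOn (riemannInvariant D u ε) D :=
  (hu.continuousOn_fderivWithin hD le_rfl).clm_apply continuousOn_const

theorem continuousOn_energyDensity (hu : ContDiffOn ℝ 1 (uncurry u) D) (hD : UniqueDiffOn ℝ D) :
    ContinuousOn (energyDensity D u) D :=
  have h := hu.continuousOn_fderivWithin hD le_rfl
  ((h.clm_apply continuousOn_const).pow 2).add ((h.clm_apply continuousOn_const).pow 2)

theorem energyDensity_eq_of_mem_nhds {s t : Set ℝ} {a b : ℝ}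
    (hu : DifferentiableWithinAt ℝ (uncurry u) (s ×ˢ t) (a, b)) (hs : s ∈ 𝓝 a) (ht : t ∈ 𝓝 b) :
    energyDensity (s ×ˢ t) u (a, b) = pdt u a b ^ 2 + pdx u a b ^ 2 := by
  rw [energyDensity, pdt_eq_fderivWithin hu hs (mem_of_mem_nhds ht),
    pdx_eq_fderivWithin hu (mem_of_mem_nhds hs) ht]

theorem sq_pdx_add_sq_pdt_le_energyDensity {s t : Set ℝ} {a b : ℝ}
    (hu : DifferentiableWithinAt ℝ (uncurry u) (s ×ˢ t) (a, b)) (hs : UniqueDiffWithinAt ℝ s a)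
    (ha : a ∈ s) (ht : t ∈ 𝓝 b) :
    pdx u a b ^ 2 + pdt u a b ^ 2 ≤ energyDensity (s ×ˢ t) u (a, b) := by
  rw [energyDensity, add_comm, pdx_eq_fderivWithin hu ha ht]
  exact add_le_add_left (sq_pdt_le_sq_fderivWithin hu hs (mem_of_mem_nhds ht)) _

end RiemannInvariants

section Rectangle

variable {T α β : ℝ}

theorem riemannInvariant_eq_of_mem_characteristic {ε x : ℝ}
    (hu : ContDiffOn ℝ 2 (uncurry u) (Icc 0 T ×ˢ Icc α β))
    (hwave : ∀ t ∈ Ioo 0 T, ∀ y ∈ Ioo α β, pdt (pdt u) t y = pdx (pdx u) t y)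
    (hε : ε ^ 2 = 1) (hline : ∀ t ∈ Icc 0 T, x + ε * t ∈ Ioo α β) {t : ℝ} (ht : t ∈ Icc 0 T) :
    riemannInvariant (Icc 0 T ×ˢ Icc α β) u ε (t, x + ε * t) =
      riemannInvariant (Icc 0 T ×ˢ Icc α β) u ε (0, x) := by
  rcases ht.1.eq_or_lt with rfl | ht₀
  · simp
  have hT : 0 < T := ht₀.trans_le ht.2
  have hαβ : α < β := (hline 0 ⟨le_rfl, hT.le⟩).1.trans (hline 0 ⟨le_rfl, hT.le⟩).2
  have hD : UniqueDiffOn ℝ (Icc 0 T ×ˢ Icc α β) :=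
    (uniqueDiffOn_Icc hT).prod (uniqueDiffOn_Icc hαβ)
  have hcont : ContinuousOn (fun r => riemannInvariant (Icc 0 T ×ˢ Icc α β) u ε (r, x + ε * r))
      (Icc 0 t) :=
    (continuousOn_riemannInvariant (hu.of_le (by norm_num)) hD ε).comp (by fun_prop)
      fun r hr => ⟨⟨hr.1, hr.2.trans ht.2⟩, Ioo_subset_Icc_self (hline r ⟨hr.1, hr.2.trans ht.2⟩)⟩
  have hinterior : ∀ r ∈ Ioo 0 T, Icc 0 T ×ˢ Icc α β ∈ 𝓝 (r, x + ε * r) := fun r hr =>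
    prod_mem_nhds (Icc_mem_nhds hr.1 hr.2)
      (Icc_mem_nhds (hline r (Ioo_subset_Icc_self hr)).1 (hline r (Ioo_subset_Icc_self hr)).2)
  have hderiv : ∀ r ∈ Ioo 0 t,
      HasDerivAt (fun r => riemannInvariant (Icc 0 T ×ˢ Icc α β) u ε (r, x + ε * r)) 0 r := by
    intro r hr
    have hrT : r ∈ Ioo 0 T := ⟨hr.1, hr.2.trans_le ht.2⟩
    have hU := hu.contDiffAt (hinterior r hrT)
    have hwave_r := hwave r hrT (x + ε * r) (hline r (Ioo_subset_Icc_self hrT))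
    rw [pdt_pdt_eq hU, pdx_pdx_eq hU] at hwave_r
    refine (hasDerivAt_fderiv_along_characteristic hU hwave_r hε).congr_of_eventuallyEq ?_
    filter_upwards [Ioo_mem_nhds hrT.1 hrT.2] with r' hr'
    rw [riemannInvariant, fderivWithin_of_mem_nhds (hinterior r' hr')]
  obtain ⟨r, -, hr⟩ := exists_hasDerivAt_eq_slope _ (fun _ => (0 : ℝ)) ht₀ hcont hderiv
  rw [eq_div_iff (sub_ne_zero.2 ht₀.ne'), zero_mul, eq_comm, sub_eq_zero] at hr
  simpa using hr

variable {a b L : ℝ}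

theorem mul_integral_sq_riemannInvariant_le {ε : ℝ} {V : Set ℝ}
    (hu : ContDiffOn ℝ 2 (uncurry u) (Icc 0 T ×ˢ Icc α β))
    (hwave : ∀ t ∈ Ioo 0 T, ∀ y ∈ Ioo α β, pdt (pdt u) t y = pdx (pdx u) t y)
    (hT : 0 < T) (hαβ : α < β) (hε : ε ^ 2 = 1) (hV : MeasurableSet V) (hVsub : V ⊆ Icc α β)
    (hL : 0 ≤ L) (hline : ∀ x ∈ Icc a b, ∀ t ∈ Icc 0 T, x + ε * t ∈ Ioo α β)
    (hwindow : ∀ x ∈ Ioc a b, ∃ t₀, Ioo t₀ (t₀ + L) ⊆ Ioo 0 T ∩ (fun t => x + ε * t) ⁻¹' V) :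
    L * ∫ x in Ioc a b, riemannInvariant (Icc 0 T ×ˢ Icc α β) u ε (0, x) ^ 2 ≤
      2 * ∫ p in Ioo 0 T ×ˢ V, energyDensity (Icc 0 T ×ˢ Icc α β) u p := by
  have hD : UniqueDiffOn ℝ (Icc 0 T ×ˢ Icc α β) :=
    (uniqueDiffOn_Icc hT).prod (uniqueDiffOn_Icc hαβ)
  have hDc : IsCompact (Icc 0 T ×ˢ Icc α β) := isCompact_Icc.prod isCompact_Icc
  have hw := (continuousOn_riemannInvariant (hu.of_le (by norm_num)) hD ε).pow 2
  have he : ContinuousOn (fun p => 2 * energyDensity (Icc 0 T ×ˢ Icc α β) u p) _ :=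
    continuousOn_const.mul (continuousOn_energyDensity (hu.of_le (by norm_num)) hD)
  have hsub : Ioo 0 T ×ˢ V ⊆ Icc 0 T ×ˢ Icc α β := prod_mono Ioo_subset_Icc_self hVsub
  have hshear : ContinuousOn (fun q : ℝ × ℝ =>
      riemannInvariant (Icc 0 T ×ˢ Icc α β) u ε (q.2, q.1 + ε * q.2) ^ 2) (Icc a b ×ˢ Icc 0 T) :=
    hw.comp (by fun_prop) fun q hq => ⟨hq.2, Ioo_subset_Icc_self (hline q.1 hq.1 q.2 hq.2)⟩
  calc L * ∫ x in Ioc a b, riemannInvariant (Icc 0 T ×ˢ Icc α β) u ε (0, x) ^ 2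
      ≤ ∫ p in Ioo 0 T ×ˢ V, riemannInvariant (Icc 0 T ×ˢ Icc α β) u ε p ^ 2 :=
        mul_setIntegral_le_of_const_along_lines measurableSet_Ioc hV (fun p => sq_nonneg _) hL
          ((hw.integrableOn_compact hDc).mono_set hsub)
          ((hshear.integrableOn_compact (isCompact_Icc.prod isCompact_Icc)).mono_set
            (prod_mono Ioc_subset_Icc_self Ioo_subset_Icc_self))
          (fun x hx t ht => by rw [riemannInvariant_eq_of_mem_characteristic hu hwave hε
            (hline x (Ioc_subset_Icc_self hx)) (Ioo_subset_Icc_self ht)]) hwindow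
    _ ≤ ∫ p in Ioo 0 T ×ˢ V, 2 * energyDensity (Icc 0 T ×ˢ Icc α β) u p :=
        setIntegral_mono_on ((hw.integrableOn_compact hDc).mono_set hsub)
          ((he.integrableOn_compact hDc).mono_set hsub) (measurableSet_Ioo.prod hV)
          fun p _ => sq_riemannInvariant_le hε p
    _ = 2 * ∫ p in Ioo 0 T ×ˢ V, energyDensity (Icc 0 T ×ˢ Icc α β) u p := integral_const_mul _ _

theorem integral_sq_pdx_add_sq_pdt_le {s : Set ℝ}
    (hu : ContDiffOn ℝ 1 (uncurry u) (Icc 0 T ×ˢ Icc α β)) (hT : 0 < T) (hαβ : α < β)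
    (hs : MeasurableSet s) (hsub : s ⊆ Ioo α β) :
    ∫ x in s, (pdx u 0 x ^ 2 + pdt u 0 x ^ 2) ≤
      ∫ x in s, energyDensity (Icc 0 T ×ˢ Icc α β) u (0, x) := by
  have h0 : (0 : ℝ) ∈ Icc 0 T := ⟨le_rfl, hT.le⟩
  have he : ContinuousOn (fun x => energyDensity (Icc 0 T ×ˢ Icc α β) u (0, x)) (Icc α β) :=
    (continuousOn_energyDensity hu ((uniqueDiffOn_Icc hT).prod (uniqueDiffOn_Icc hαβ))).comp
      (by fun_prop) fun x hx => ⟨h0, hx⟩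
  refine integral_mono_of_nonneg (.of_forall fun x => by positivity)
    ((he.integrableOn_compact isCompact_Icc).mono_set (hsub.trans Ioo_subset_Icc_self))
    ((ae_restrict_iff' hs).2 (.of_forall fun x hx => ?_))
  exact sq_pdx_add_sq_pdt_le_energyDensity
    (hu.differentiableOn one_ne_zero _ ⟨h0, Ioo_subset_Icc_self (hsub hx)⟩)
    (uniqueDiffOn_Icc hT 0 h0) h0 (Icc_mem_nhds (hsub hx).1 (hsub hx).2)

theorem integral_integral_sq_pdt_add_sq_pdx_eq {V : Set ℝ}
    (hu : ContDiffOn ℝ 1 (uncurry u) (Icc 0 T ×ˢ Icc α β)) (hT : 0 < T) (hαβ : α < β)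
    (hV : MeasurableSet V) (hVsub : V ⊆ Ioo α β) :
    ∫ t in Ioo 0 T, ∫ y in V, (pdt u t y ^ 2 + pdx u t y ^ 2) =
      ∫ p in Ioo 0 T ×ˢ V, energyDensity (Icc 0 T ×ˢ Icc α β) u p := by
  have he := continuousOn_energyDensity hu ((uniqueDiffOn_Icc hT).prod (uniqueDiffOn_Icc hαβ))
  rw [Measure.volume_eq_prod, setIntegral_prod _ ((he.integrableOn_compact
    (isCompact_Icc.prod isCompact_Icc)).mono_set
      (prod_mono Ioo_subset_Icc_self (hVsub.trans Ioo_subset_Icc_self)))]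
  refine setIntegral_congr_fun measurableSet_Ioo fun t ht => setIntegral_congr_fun hV fun y hy => ?_
  exact (energyDensity_eq_of_mem_nhds (hu.differentiableOn one_ne_zero _
    ⟨Ioo_subset_Icc_self ht, Ioo_subset_Icc_self (hVsub hy)⟩) (Icc_mem_nhds ht.1 ht.2)
    (Icc_mem_nhds (hVsub hy).1 (hVsub hy).2)).symm

theorem mul_integral_initial_energy_le {Vₗ Vᵣ : Set ℝ}
    (hu : ContDiffOn ℝ 2 (uncurry u) (Icc 0 T ×ˢ Icc α β))
    (hwave : ∀ t ∈ Ioo 0 T, ∀ y ∈ Ioo α β, pdt (pdt u) t y = pdx (pdx u) t y)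
    (hT : 0 < T) (hαβ : α < β) (hVₗ : MeasurableSet Vₗ) (hVᵣ : MeasurableSet Vᵣ)
    (hVₗsub : Vₗ ⊆ Ioo α β) (hVᵣsub : Vᵣ ⊆ Ioo α β) (hdisj : Disjoint Vₗ Vᵣ) (hL : 0 ≤ L)
    (hcone : Icc (a - T) (b + T) ⊆ Ioo α β)
    (hwindowₗ : ∀ x ∈ Ioc a b, ∃ t₀, Ioo t₀ (t₀ + L) ⊆ Ioo 0 T ∩ (fun t => x - t) ⁻¹' Vₗ)
    (hwindowᵣ : ∀ x ∈ Ioc a b, ∃ t₀, Ioo t₀ (t₀ + L) ⊆ Ioo 0 T ∩ (fun t => x + t) ⁻¹' Vᵣ) :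
    L * ∫ x in Ioc a b, (pdx u 0 x ^ 2 + pdt u 0 x ^ 2) ≤
      ∫ t in Ioo 0 T, ∫ y in Vₗ ∪ Vᵣ, (pdt u t y ^ 2 + pdx u t y ^ 2) := by
  set D := Icc 0 T ×ˢ Icc α β
  have hu₁ : ContDiffOn ℝ 1 (uncurry u) D := hu.of_le (by norm_num)
  have hD : UniqueDiffOn ℝ D := (uniqueDiffOn_Icc hT).prod (uniqueDiffOn_Icc hαβ)
  have hline : ∀ ε : ℝ, (ε = 1 ∨ ε = -1) → ∀ x ∈ Icc a b, ∀ t ∈ Icc 0 T, x + ε * t ∈ Ioo α β := by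
    rintro ε hε x hx t ht
    apply hcone
    rcases hε with rfl | rfl <;> constructor <;> linarith [hx.1, hx.2, ht.1, ht.2]
  have hab : Icc a b ⊆ Ioo α β := fun x hx => hcone ⟨by linarith [hx.1], by linarith [hx.2]⟩
  have hinitial : ∀ ε, IntegrableOn (fun x => riemannInvariant D u ε (0, x) ^ 2) (Ioc a b) := by
    intro ε
    have h : ContinuousOn (fun x => riemannInvariant D u ε (0, x) ^ 2) (Icc a b) :=
      ((continuousOn_riemannInvariant hu₁ hD ε).pow 2).comp (by fun_prop)
        fun x hx => ⟨⟨le_rfl, hT.le⟩, Ioo_subset_Icc_self (hab hx)⟩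
    exact (h.integrableOn_compact isCompact_Icc).mono_set Ioc_subset_Icc_self
  have he := continuousOn_energyDensity hu₁ hD
  have hpiece : ∀ V ⊆ Ioo α β, IntegrableOn (energyDensity D u) (Ioo 0 T ×ˢ V) := fun V hV =>
    (he.integrableOn_compact (isCompact_Icc.prod isCompact_Icc)).mono_set
      (prod_mono Ioo_subset_Icc_self (hV.trans Ioo_subset_Icc_self))
  calc L * ∫ x in Ioc a b, (pdx u 0 x ^ 2 + pdt u 0 x ^ 2)
      ≤ L * ∫ x in Ioc a b, energyDensity D u (0, x) :=
        mul_le_mul_of_nonneg_left (integral_sq_pdx_add_sq_pdt_le hu₁ hT hαβ measurableSet_Ioc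
          (Ioc_subset_Icc_self.trans hab)) hL
    _ = (L * (∫ x in Ioc a b, riemannInvariant D u 1 (0, x) ^ 2) +
          L * ∫ x in Ioc a b, riemannInvariant D u (-1) (0, x) ^ 2) / 2 := by
        rw [← mul_add, ← integral_add (hinitial 1) (hinitial (-1))]
        simp only [sq_riemannInvariant_add_sq, integral_const_mul]
        ring
    _ ≤ (2 * (∫ p in Ioo 0 T ×ˢ Vᵣ, energyDensity D u p) +
          2 * ∫ p in Ioo 0 T ×ˢ Vₗ, energyDensity D u p) / 2 := by
        gcongr (?_ + ?_) / 2
        · exact mul_integral_sq_riemannInvariant_le hu hwave hT hαβ (by norm_num) hVᵣ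
            (hVᵣsub.trans Ioo_subset_Icc_self) hL (hline 1 (.inl rfl)) (by simpa using hwindowᵣ)
        · exact mul_integral_sq_riemannInvariant_le hu hwave hT hαβ (by norm_num) hVₗ
            (hVₗsub.trans Ioo_subset_Icc_self) hL (hline (-1) (.inr rfl))
            (by simpa [← sub_eq_add_neg] using hwindowₗ)
    _ = ∫ p in Ioo 0 T ×ˢ (Vₗ ∪ Vᵣ), energyDensity D u p := by
        rw [prod_union, setIntegral_union (disjoint_prod.2 (.inr hdisj))
          (measurableSet_Ioo.prod hVᵣ) (hpiece Vₗ hVₗsub) (hpiece Vᵣ hVᵣsub)]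
        ring
    _ = ∫ t in Ioo 0 T, ∫ y in Vₗ ∪ Vᵣ, (pdt u t y ^ 2 + pdx u t y ^ 2) :=
        (integral_integral_sq_pdt_add_sq_pdx_eq hu₁ hT hαβ (hVₗ.union hVᵣ)
          (union_subset hVₗsub hVᵣsub)).symm

end Rectangle

end WaveEquation

theorem exists_window_right {x L : ℝ} (h1 : L ≤ 1) (h2 : L ≤ 2 - x) (h3 : L ≤ 2 + x) :
    ∃ t₀, Ioo t₀ (t₀ + L) ⊆ Ioo 0 3 ∩ (fun t => x + t) ⁻¹' Ioo 1 2 := by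
  refine ⟨max 0 (1 - x), fun t ht => ?_⟩
  have h₀ := le_max_left 0 (1 - x)
  have h₁ := le_max_right 0 (1 - x)
  have h₂ : max 0 (1 - x) ≤ 3 - L := max_le (by linarith) (by linarith)
  have h₃ : max 0 (1 - x) ≤ 2 - x - L := max_le (by linarith) (by linarith)
  exact ⟨⟨by linarith [ht.1], by linarith [ht.2]⟩, by linarith [ht.1], by linarith [ht.2]⟩

theorem exists_window_left {x L : ℝ} (h1 : L ≤ 1) (h2 : L ≤ 2 - x) (h3 : L ≤ 2 + x) :
    ∃ t₀, Ioo t₀ (t₀ + L) ⊆ Ioo 0 3 ∩ (fun t => x - t) ⁻¹' Ioo (-2) (-1) := by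
  obtain ⟨t₀, h⟩ := exists_window_right (x := -x) h1 (by linarith) (by linarith)
  refine ⟨t₀, fun t ht => ⟨(h ht).1, ?_⟩⟩
  have hx := (h ht).2
  simp only [mem_preimage, mem_Ioo] at hx ⊢
  constructor <;> linarith [hx.1, hx.2]

theorem local_recovery_initial_energy_general (a b : ℝ) (ha : -2 < a) (hb : b < 2) :
    ∃ C : ℝ, 0 < C ∧
      ∀ u : ℝ → ℝ → ℝ,
        -- u is of class C² on [0,3] × [−10,10]
        ContDiffOn ℝ 2 (Function.uncurry u) (Set.Icc (0 : ℝ) 3 ×ˢ Set.Icc (-10 : ℝ) 10) →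
        -- u solves the wave equation on [0,3] × [−10,10]
        (∀ t ∈ Set.Icc (0 : ℝ) 3, ∀ x ∈ Set.Icc (-10 : ℝ) 10,
          pdt (pdt u) t x = pdx (pdx u) t x) →
        -- Dirichlet boundary conditions
        (∀ t ∈ Set.Icc (0 : ℝ) 3, u t (-10) = 0 ∧ u t 10 = 0) →
        -- local observability inequality, with no support restriction on the data
        ∫ x in Set.Ioc a b, ((pdx u 0 x) ^ 2 + (pdt u 0 x) ^ 2) ≤
          C * ∫ t in Set.Ioo (0 : ℝ) 3,
                ∫ x in (Set.Ioo (-2 : ℝ) (-1) ∪ Set.Ioo (1 : ℝ) 2),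
                  ((pdt u t x) ^ 2 + (pdx u t x) ^ 2) := by
  set L := min 1 (min (2 - b) (2 + a))
  have hL : 0 < L := lt_min one_pos (lt_min (by linarith) (by linarith))
  have hL₁ : L ≤ 1 := min_le_left _ _
  have hLb : L ≤ 2 - b := (min_le_right _ _).trans (min_le_left _ _)
  have hLa : L ≤ 2 + a := (min_le_right _ _).trans (min_le_right _ _)
  refine ⟨1 / L, one_div_pos.2 hL, fun u hu hwave _ => ?_⟩
  have key := mul_integral_initial_energy_le (a := a) (b := b) hu
    (fun t ht x hx => hwave t (Ioo_subset_Icc_self ht) x (Ioo_subset_Icc_self hx))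
    (by norm_num) (by norm_num) measurableSet_Ioo measurableSet_Ioo
    (Ioo_subset_Ioo (by norm_num) (by norm_num)) (Ioo_subset_Ioo (by norm_num) (by norm_num))
    (Ioo_disjoint_Ioo.2 (by norm_num)) hL.le
    (Icc_subset_Ioo (by linarith) (by linarith))
    (fun x hx => exists_window_left hL₁ (by linarith [hx.2]) (by linarith [hx.1]))
    (fun x hx => exists_window_right hL₁ (by linarith [hx.2]) (by linarith [hx.1]))
  rw [one_div_mul_eq_div, le_div_iff₀ hL, mul_comm]
  exact key

theorem local_recovery_initial_energy (a b : ℝ) (ha : -2 < a) (hab : a ≤ b) (hb : b < 2) :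
    ∃ C : ℝ, 0 < C ∧
      ∀ u : ℝ → ℝ → ℝ,
        -- u is of class C² on [0,3] × [−10,10]
        ContDiffOn ℝ 2 (Function.uncurry u) (Set.Icc (0 : ℝ) 3 ×ˢ Set.Icc (-10 : ℝ) 10) →
        -- u solves the wave equation on [0,3] × [−10,10]
        (∀ t ∈ Set.Icc (0 : ℝ) 3, ∀ x ∈ Set.Icc (-10 : ℝ) 10,
          pdt (pdt u) t x = pdx (pdx u) t x) →
        -- Dirichlet boundary conditions
        (∀ t ∈ Set.Icc (0 : ℝ) 3, u t (-10) = 0 ∧ u t 10 = 0) →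
        -- local observability inequality, with no support restriction on the data
        ∫ x in Set.Ioc a b, ((pdx u 0 x) ^ 2 + (pdt u 0 x) ^ 2) ≤
          C * ∫ t in Set.Ioo (0 : ℝ) 3,
                ∫ x in (Set.Ioo (-2 : ℝ) (-1) ∪ Set.Ioo (1 : ℝ) 2),
                  ((pdt u t x) ^ 2 + (pdx u t x) ^ 2) :=
  local_recovery_initial_energy_general a b ha hb
end
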